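/- arXiv:2505.01240 — 9 statements merged into one kernel-verified Lean document; each statement's English description precedes it below -/
import Mathlib

section
/- Assume the support S = {j : (v_*)_j ≠ 0} is nonempty, v_* ∈ V_b, and q_* = v_* + τη where η ∈ V satisfies: η_j = (v_*)_j/‖(v_*)_j‖ for every j ∈ S, ‖η_j‖ < 1 for every j ∉ S, and η is orthogonal to U (so that q_* is a fixed point of H_τ lying in the interior of Q with S_τ(q_*) = v_*). Let μ = min_{j ∈ S} ‖(v_*)_j‖ and c = sup{⟨u, w⟩ : u ∈ U, w ∈ W, ‖u‖ = ‖w‖ = 1} (c = 0 if U or W is the zero subspace). If a sequence (q_k) in V satisfies q_{k+1} = H_τ(q_k) for all k and q_k → q_*, then there exists K ∈ ℕ such that for all k ≥ K, ‖q_k − q_*‖ ≤ (c + 2τ/μ)^{k−K} ‖q_K − q_*‖. -/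
open scoped RealInnerProductSpace
open scoped Classical

noncomputable section

/-- The space `V` of `N`-tuples of vectors in `ℝ^d`, with the ℓ²-product inner product. -/
abbrev Vsp (N d : ℕ) : Type := PiLp 2 (fun _ : Fin N => EuclideanSpace ℝ (Fin d))

/-- The blockwise shrinkage (block soft-thresholding) operator `S_τ`. -/
noncomputable def shrink {N d : ℕ} (τ : ℝ) (q : Vsp N d) : Vsp N d :=
  WithLp.toLp 2 (fun j => if ‖q j‖ ≤ τ then 0 else q j - (τ / ‖q j‖) • q j)

/-- The blockwise normalization operator `𝒩`. -/
noncomputable def nrmOp {N d : ℕ} (q : Vsp N d) : Vsp N d :=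
  WithLp.toLp 2 (fun j => if q j = 0 then 0 else ‖q j‖⁻¹ • q j)

/-- The subspace of vectors in `V` vanishing on a given set of block indices. -/
def vanishingOn {N d : ℕ} (s : Set (Fin N)) : Submodule ℝ (Vsp N d) where
  carrier := {z | ∀ j ∈ s, z j = 0}
  add_mem' := by
    intro a b ha hb j hj
    simp only [PiLp.add_apply, ha j hj, hb j hj, add_zero]
  zero_mem' := by
    intro j hj
    simp only [PiLp.zero_apply]
  smul_mem' := by
    intro c a ha j hj
    simp only [PiLp.smul_apply, ha j hj, smul_zero]

/-!
Once the iterates are close to `q_*`, every block keeps the thresholding pattern of `q_*`, so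
`S_τ q = P_W (q - τ 𝒩 q)` and, writing `e = q - q_*`, one DR step reads
`e ↦ P_U (P_W e - δ) + P_{U⊥} (e - P_W e + δ)` with `δ = τ P_W (𝒩 q - 𝒩 q_*)`, `‖δ‖ ≤ 2τ/μ ‖e‖`.
The `δ`-part is the reflection `P_{U⊥} δ - P_U δ`, of norm `‖δ‖`. The rest is `c`-contractive
on `U + W`: `P_U` shrinks `W` by `c` by definition of `c`, and `P_{U⊥}` shrinks `(U + W) ∩ W⊥` by
`c` as well. The errors do stay in `U + W`: each step changes `e` by a vector of `U + W`,
and `e → 0` while `U + W` is closed.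
-/

open Filter Topology

lemma norm_inv_smul_sub_inv_smul_le {F : Type*} [NormedAddCommGroup F] [NormedSpace ℝ F]
    {a : F} (ha : a ≠ 0) (b : F) : ‖‖a‖⁻¹ • a - ‖b‖⁻¹ • b‖ ≤ 2 * ‖a - b‖ / ‖a‖ := by
  have ha' : 0 < ‖a‖ := norm_pos_iff.2 ha
  have hsplit : ‖a‖⁻¹ • a - ‖b‖⁻¹ • b
      = ‖a‖⁻¹ • (a - b) + (‖a‖⁻¹ * (‖b‖ - ‖a‖)) • (‖b‖⁻¹ • b) := by
    rcases eq_or_ne b 0 with rfl | hb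
    · simp
    have hb' : ‖b‖ ≠ 0 := norm_ne_zero_iff.2 hb
    rw [smul_smul, show ‖a‖⁻¹ * (‖b‖ - ‖a‖) * ‖b‖⁻¹ = ‖a‖⁻¹ - ‖b‖⁻¹ by field_simp]
    module
  have hunit : ‖‖b‖⁻¹ • b‖ ≤ 1 := by
    rcases eq_or_ne b 0 with rfl | hb
    · simp
    · exact (norm_smul_inv_norm hb).le
  calc ‖‖a‖⁻¹ • a - ‖b‖⁻¹ • b‖
      ≤ ‖a‖⁻¹ * ‖a - b‖ + ‖a‖⁻¹ * |‖b‖ - ‖a‖| * ‖‖b‖⁻¹ • b‖ := by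
        rw [hsplit]
        refine (norm_add_le _ _).trans_eq ?_
        rw [norm_smul, norm_smul, norm_mul, norm_inv, norm_norm, Real.norm_eq_abs]
    _ ≤ ‖a‖⁻¹ * ‖a - b‖ + ‖a‖⁻¹ * ‖a - b‖ * 1 := by
        gcongr
        rw [abs_sub_comm]
        exact abs_norm_sub_norm_le a b
    _ = 2 * ‖a - b‖ / ‖a‖ := by field_simp; ring

section Normalize

variable {F : Type*} [NormedAddCommGroup F] [NormedSpace ℝ F] {x : F}

lemma add_smul_inv_norm_smul_eq (hx : x ≠ 0) (t : ℝ) :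
    x + t • (‖x‖⁻¹ • x) = ((‖x‖ + t) * ‖x‖⁻¹) • x := by
  rw [add_mul, mul_inv_cancel₀ (norm_ne_zero_iff.2 hx), add_smul, one_smul, smul_smul]

lemma norm_add_smul_inv_norm_smul (hx : x ≠ 0) {t : ℝ} (ht : 0 ≤ t) :
    ‖x + t • (‖x‖⁻¹ • x)‖ = ‖x‖ + t := by
  have hx' : 0 < ‖x‖ := norm_pos_iff.2 hx
  rw [add_smul_inv_norm_smul_eq hx, norm_smul, Real.norm_of_nonneg (by positivity)]
  field_simp

lemma inv_norm_smul_add_smul_inv_norm_smul (hx : x ≠ 0) {t : ℝ} (ht : 0 ≤ t) :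
    ‖x + t • (‖x‖⁻¹ • x)‖⁻¹ • (x + t • (‖x‖⁻¹ • x)) = ‖x‖⁻¹ • x := by
  have hx' : 0 < ‖x‖ := norm_pos_iff.2 hx
  rw [norm_add_smul_inv_norm_smul hx ht, add_smul_inv_norm_smul_eq hx, smul_smul]
  congr 1
  field_simp

end Normalize

lemma norm_le_mul_norm_of_forall_norm_apply_le {ι : Type*} [Fintype ι] {β γ : ι → Type*}
    [∀ i, NormedAddCommGroup (β i)] [∀ i, NormedAddCommGroup (γ i)] {x : PiLp 2 β} {y : PiLp 2 γ}
    {r : ℝ} (hr : 0 ≤ r) (h : ∀ i, ‖x i‖ ≤ r * ‖y i‖) : ‖x‖ ≤ r * ‖y‖ := by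
  rw [← pow_le_pow_iff_left₀ (norm_nonneg _) (by positivity) two_ne_zero, mul_pow,
    PiLp.norm_sq_eq_of_L2, PiLp.norm_sq_eq_of_L2, Finset.mul_sum]
  exact Finset.sum_le_sum fun i _ => by
    rw [← mul_pow]; exact pow_le_pow_left₀ (norm_nonneg _) (h i) 2

lemma AddSubgroup.mem_of_tendsto_zero_of_sub_mem {G : Type*} [TopologicalSpace G] [AddCommGroup G]
    [IsTopologicalAddGroup G] {M : AddSubgroup G} (hM : IsClosed (M : Set G)) {x : ℕ → G}
    (hx : Tendsto x atTop (𝓝 0)) {K₀ : ℕ} (hstep : ∀ k ≥ K₀, x (k + 1) - x k ∈ M) :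
    ∀ k ≥ K₀, x k ∈ M := by
  have hdiff : ∀ k ≥ K₀, x k - x K₀ ∈ M := by
    intro k hk
    induction k, hk using Nat.le_induction with
    | base => simp
    | succ k hk ih => simpa using M.add_mem (hstep k hk) ih
  have hK₀ : x K₀ ∈ M := by
    refine hM.mem_of_tendsto (f := fun k => x K₀ - x k) (by simpa using tendsto_const_nhds.sub hx)
      (eventually_atTop.2 ⟨K₀, fun k hk => ?_⟩)
    simpa using M.neg_mem (hdiff k hk)
  intro k hk
  simpa using M.add_mem (hdiff k hk) hK₀

lemma sq_sub_sq_le_of_inner_bounds {a p n c : ℝ} (hp : 0 ≤ p) (ha : 0 ≤ a)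
    (hcos : a ^ 2 ≤ c * n * a) (hproj : a ^ 2 ≤ p * n) (han : a ^ 2 ≤ n ^ 2) :
    a ^ 2 - p ^ 2 ≤ c ^ 2 * (n ^ 2 - a ^ 2) := by
  rcases ha.eq_or_lt with rfl | ha
  · nlinarith
  have hn : 0 < n := by nlinarith
  have hacn : a ≤ c * n := le_of_mul_le_mul_right (by nlinarith) ha
  have key : n ^ 2 * (a ^ 2 - p ^ 2) ≤ n ^ 2 * (c ^ 2 * (n ^ 2 - a ^ 2)) := by
    nlinarith [mul_le_mul hproj hproj (sq_nonneg a) (by positivity), pow_le_pow_left₀ ha.le hacn 2]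
  exact le_of_mul_le_mul_left key (by positivity)

section Angle

variable {E : Type*} [NormedAddCommGroup E] [InnerProductSpace ℝ E]

/-- The paper's `c`; it is `0` when `U` or `W` is trivial because `sSup ∅ = 0`. -/
def cosineSup (U W : Submodule ℝ E) : ℝ :=
  sSup {r : ℝ | ∃ u ∈ U, ∃ w ∈ W, ‖u‖ = 1 ∧ ‖w‖ = 1 ∧ r = ⟪u, w⟫}

variable {U W : Submodule ℝ E}

lemma bddAbove_cosineSup_set :
    BddAbove {r : ℝ | ∃ u ∈ U, ∃ w ∈ W, ‖u‖ = 1 ∧ ‖w‖ = 1 ∧ r = ⟪u, w⟫} := by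
  refine ⟨1, ?_⟩
  rintro r ⟨u, -, w, -, hu, hw, rfl⟩
  simpa [hu, hw] using real_inner_le_norm u w

lemma cosineSup_nonneg : 0 ≤ cosineSup U W := by
  rcases Set.eq_empty_or_nonempty
      {r : ℝ | ∃ u ∈ U, ∃ w ∈ W, ‖u‖ = 1 ∧ ‖w‖ = 1 ∧ r = ⟪u, w⟫}
    with hempty | ⟨r, u, hu, w, hw, hu1, hw1, rfl⟩
  · rw [cosineSup, hempty, Real.sSup_empty]
  · have h₁ : ⟪u, w⟫ ≤ cosineSup U W :=
      le_csSup bddAbove_cosineSup_set ⟨u, hu, w, hw, hu1, hw1, rfl⟩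
    have h₂ : ⟪-u, w⟫ ≤ cosineSup U W :=
      le_csSup bddAbove_cosineSup_set ⟨-u, U.neg_mem hu, w, hw, by rwa [norm_neg], hw1, rfl⟩
    rw [inner_neg_left] at h₂
    linarith

lemma real_inner_le_cosineSup_mul {u w : E} (hu : u ∈ U) (hw : w ∈ W) :
    ⟪u, w⟫ ≤ cosineSup U W * ‖u‖ * ‖w‖ := by
  rcases eq_or_ne u 0 with rfl | hu0
  · simp
  rcases eq_or_ne w 0 with rfl | hw0
  · simp
  have hunit : ⟪‖u‖⁻¹ • u, ‖w‖⁻¹ • w⟫ ≤ cosineSup U W :=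
    le_csSup bddAbove_cosineSup_set ⟨_, U.smul_mem _ hu, _, W.smul_mem _ hw,
      norm_smul_inv_norm hu0, norm_smul_inv_norm hw0, rfl⟩
  rw [real_inner_smul_left, real_inner_smul_right] at hunit
  have hu' : 0 < ‖u‖ := norm_pos_iff.2 hu0
  have hw' : 0 < ‖w‖ := norm_pos_iff.2 hw0
  calc ⟪u, w⟫ = ‖u‖ * ‖w‖ * (‖u‖⁻¹ * (‖w‖⁻¹ * ⟪u, w⟫)) := by field_simp
    _ ≤ ‖u‖ * ‖w‖ * cosineSup U W := by gcongr
    _ = cosineSup U W * ‖u‖ * ‖w‖ := by ring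

variable [U.HasOrthogonalProjection]

lemma norm_starProjection_le_cosineSup {w : E} (hw : w ∈ W) :
    ‖U.starProjection w‖ ≤ cosineSup U W * ‖w‖ := by
  have hsq : ‖U.starProjection w‖ ^ 2 ≤ cosineSup U W * ‖U.starProjection w‖ * ‖w‖ := by
    calc ‖U.starProjection w‖ ^ 2 = ⟪U.starProjection w, U.starProjection w⟫ :=
          (real_inner_self_eq_norm_sq _).symm
      _ = ⟪U.starProjection w, w⟫ := by
          rw [← Submodule.inner_starProjection_left_eq_right,
            U.starProjection_eq_self_iff.2 (U.starProjection_apply_mem w)]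
      _ ≤ _ := real_inner_le_cosineSup_mul (U.starProjection_apply_mem w) hw
  nlinarith [norm_nonneg (U.starProjection w),
    mul_nonneg (cosineSup_nonneg (U := U) (W := W)) (norm_nonneg w)]

lemma norm_starProjection_orthogonal_le_cosineSup {y : E} (hy : y ∈ U ⊔ W) (hyW : y ∈ Wᗮ) :
    ‖Uᗮ.starProjection y‖ ≤ cosineSup U W * ‖y‖ := by
  obtain ⟨u, hu, w, hw, rfl⟩ := Submodule.mem_sup.1 hy
  have huw : ⟪u, w⟫ = -‖w‖ ^ 2 := by
    have := hyW w hw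
    rw [real_inner_comm, inner_add_left, real_inner_self_eq_norm_sq] at this
    linarith
  have hproj : Uᗮ.starProjection (u + w) = w - U.starProjection w := by
    rw [map_add, U.starProjection_orthogonal_val, U.starProjection_orthogonal_val,
      U.starProjection_eq_self_iff.2 hu, sub_self, zero_add]
  have hcos : ‖w‖ ^ 2 ≤ cosineSup U W * ‖u‖ * ‖w‖ := by
    simpa [huw, inner_neg_left] using real_inner_le_cosineSup_mul (U.neg_mem hu) hw
  have hPw : ‖w‖ ^ 2 ≤ ‖U.starProjection w‖ * ‖u‖ := by
    calc ‖w‖ ^ 2 = ⟪U.starProjection w, -u⟫ := by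
          rw [Submodule.inner_starProjection_left_eq_right, U.starProjection_eq_self_iff.2
            (U.neg_mem hu), inner_neg_right, real_inner_comm, huw, neg_neg]
      _ ≤ ‖U.starProjection w‖ * ‖u‖ := by simpa using real_inner_le_norm _ (-u)
  have hy2 : ‖u + w‖ ^ 2 = ‖u‖ ^ 2 - ‖w‖ ^ 2 := by
    rw [norm_add_sq_real, huw]; ring
  have hPy2 : ‖w - U.starProjection w‖ ^ 2 = ‖w‖ ^ 2 - ‖U.starProjection w‖ ^ 2 := by
    have := U.norm_sq_eq_add_norm_sq_starProjection w
    rw [U.starProjection_orthogonal_val] at this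
    linarith
  rw [hproj, ← pow_le_pow_iff_left₀ (norm_nonneg _)
    (mul_nonneg cosineSup_nonneg (norm_nonneg _)) two_ne_zero, mul_pow, hy2, hPy2]
  have hwu : ‖w‖ ^ 2 ≤ ‖u‖ ^ 2 := by nlinarith [sq_nonneg ‖u + w‖]
  exact sq_sub_sq_le_of_inner_bounds (norm_nonneg _) (norm_nonneg _) hcos hPw hwu

lemma norm_linearizedStep_le [W.HasOrthogonalProjection] {e : E} (he : e ∈ U ⊔ W) (δ : E) :
    ‖U.starProjection (W.starProjection e - δ) + Uᗮ.starProjection (e - (W.starProjection e - δ))‖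
      ≤ cosineSup U W * ‖e‖ + ‖δ‖ := by
  set c := cosineSup U W
  set w := W.starProjection e
  set y := Wᗮ.starProjection e
  have hy : e - w = y := (W.starProjection_orthogonal_val e).symm
  have hsplit : U.starProjection (w - δ) + Uᗮ.starProjection (e - (w - δ))
      = (U.starProjection w + Uᗮ.starProjection y)
        + (Uᗮ.starProjection δ - U.starProjection δ) := by
    rw [sub_sub_eq_add_sub, add_sub_right_comm, hy, map_sub, map_add]; abel
  have hyUW : y ∈ U ⊔ W :=
    hy ▸ Submodule.sub_mem _ he (Submodule.mem_sup_right (W.starProjection_apply_mem e))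
  have hmain : ‖U.starProjection w + Uᗮ.starProjection y‖ ≤ c * ‖e‖ := by
    have hw := norm_starProjection_le_cosineSup (U := U) (W.starProjection_apply_mem e)
    have hy' := norm_starProjection_orthogonal_le_cosineSup hyUW (Wᗮ.starProjection_apply_mem e)
    rw [← pow_le_pow_iff_left₀ (norm_nonneg _) (mul_nonneg cosineSup_nonneg (norm_nonneg _))
      two_ne_zero, norm_add_sq_real, Submodule.inner_right_of_mem_orthogonal
      (U.starProjection_apply_mem w) (Uᗮ.starProjection_apply_mem y), mul_pow,
      W.norm_sq_eq_add_norm_sq_starProjection e]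
    nlinarith [pow_le_pow_left₀ (norm_nonneg _) hw 2, pow_le_pow_left₀ (norm_nonneg _) hy' 2]
  have hreflect : ‖Uᗮ.starProjection δ - U.starProjection δ‖ = ‖δ‖ := by
    rw [← sq_eq_sq₀ (norm_nonneg _) (norm_nonneg _), norm_sub_sq_real,
      Submodule.inner_left_of_mem_orthogonal (U.starProjection_apply_mem δ)
        (Uᗮ.starProjection_apply_mem δ), U.norm_sq_eq_add_norm_sq_starProjection δ]
    ring
  rw [hsplit]
  exact (norm_add_le _ _).trans (add_le_add hmain hreflect.le)

end Angle

section DouglasRachford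

variable {E : Type*} [NormedAddCommGroup E] [InnerProductSpace ℝ E] {U W : Submodule ℝ E}
  [U.HasOrthogonalProjection]

lemma eq_add_starProjection_of_forall_norm_le {v x p : E} (hp : p - v ∈ U)
    (hmin : ∀ u ∈ U, ‖x - p‖ ≤ ‖x - (v + u)‖) : p = v + U.starProjection (x - v) := by
  have hinf : ‖(x - v) - (p - v)‖ = ⨅ u : (U : Set E), ‖(x - v) - u‖ := by
    refine le_antisymm (le_ciInf fun u => ?_) ?_
    · simpa [sub_sub] using hmin u u.2
    · exact ciInf_le ⟨0, Set.forall_mem_range.2 fun _ => norm_nonneg _⟩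
        (⟨p - v, hp⟩ : (U : Set E))
  rw [U.eq_starProjection_of_mem_of_inner_eq_zero hp
    ((U.norm_eq_iInf_iff_real_inner_eq_zero hp).1 hinf)]
  abel

lemma drs_sub_fixedPoint_eq {P : E → E} {v q' : E} (hP : ∀ x, P x = v + U.starProjection (x - v))
    (hq' : U.starProjection (q' - v) = 0) (q s : E) :
    P ((2 : ℝ) • s - q) + q - s - q'
      = U.starProjection (s - v) + Uᗮ.starProjection ((q - q') - (s - v)) := by
  have hq'' : U.starProjection q' = U.starProjection v := by rwa [map_sub, sub_eq_zero] at hq'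
  rw [hP, U.starProjection_orthogonal_val]
  simp only [map_sub, map_smul, hq'']
  module

lemma starProjection_add_sub_mem_sup {s : E} (hs : s ∈ W) (e : E) :
    U.starProjection s + Uᗮ.starProjection (e - s) - e ∈ U ⊔ W := by
  have h : U.starProjection s + Uᗮ.starProjection (e - s) - e
      = (U.starProjection s - U.starProjection (e - s)) + -s := by
    rw [U.starProjection_orthogonal_val]; abel
  rw [h]
  exact Submodule.add_mem _ (Submodule.mem_sup_left (U.sub_mem (U.starProjection_apply_mem _)
    (U.starProjection_apply_mem _)))
    (Submodule.mem_sup_right (W.neg_mem hs))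

end DouglasRachford

lemma eq_add_starProjection_of_isMetricProjection {E X Z : Type*} [NormedAddCommGroup E]
    [InnerProductSpace ℝ E] [AddCommGroup X] [Module ℝ X] [AddCommGroup Z] [Module ℝ Z]
    (K : X →ₗ[ℝ] E) (A : X →ₗ[ℝ] Z) {b : Z} [((LinearMap.ker A).map K).HasOrthogonalProjection]
    {P : E → E} (hP : ∀ q, (∃ u, A u = b ∧ K u = P q) ∧
      ∀ v, (∃ u, A u = b ∧ K u = v) → ‖q - P q‖ ≤ ‖q - v‖)
    {u₀ : X} (hu₀ : A u₀ = b) (x : E) :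
    P x = K u₀ + ((LinearMap.ker A).map K).starProjection (x - K u₀) := by
  obtain ⟨⟨u, hu, hPu⟩, hmin⟩ := hP x
  refine eq_add_starProjection_of_forall_norm_le ⟨u - u₀, by simp [hu, hu₀], by simp [hPu]⟩ ?_
  rintro _ ⟨u', hu', rfl⟩
  exact hmin _ ⟨u₀ + u', by simp [hu₀, LinearMap.mem_ker.1 hu'], by simp⟩

section LinearRate

variable {E : Type*} [NormedAddCommGroup E] [InnerProductSpace ℝ E] [FiniteDimensional ℝ E]
  {U W : Submodule ℝ E}

lemma norm_le_pow_mul_of_linearizedStep {e δ : ℕ → E} {r : ℝ} {K₀ : ℕ} (hr : 0 ≤ r)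
    (he : Tendsto e atTop (𝓝 0)) (hδW : ∀ k ≥ K₀, δ k ∈ W) (hδ : ∀ k ≥ K₀, ‖δ k‖ ≤ r * ‖e k‖)
    (hstep : ∀ k ≥ K₀, e (k + 1) = U.starProjection (W.starProjection (e k) - δ k)
      + Uᗮ.starProjection (e k - (W.starProjection (e k) - δ k))) :
    ∀ k ≥ K₀, ‖e k‖ ≤ (cosineSup U W + r) ^ (k - K₀) * ‖e K₀‖ := by
  have hsup : ∀ k ≥ K₀, e k ∈ U ⊔ W :=
    AddSubgroup.mem_of_tendsto_zero_of_sub_mem (M := (U ⊔ W).toAddSubgroup)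
      (U ⊔ W).closed_of_finiteDimensional he fun k hk => by
        rw [hstep k hk]
        exact starProjection_add_sub_mem_sup
          (W.sub_mem (W.starProjection_apply_mem _) (hδW k hk)) _
  have hcontract : ∀ k ≥ K₀, ‖e (k + 1)‖ ≤ (cosineSup U W + r) * ‖e k‖ := fun k hk => by
    rw [hstep k hk, add_mul]
    exact (norm_linearizedStep_le (hsup k hk) (δ k)).trans (add_le_add_right (hδ k hk) _)
  intro k hk
  obtain ⟨n, rfl⟩ := Nat.exists_eq_add_of_le hk
  rw [Nat.add_sub_cancel_left]
  exact le_geom (u := fun i => ‖e (K₀ + i)‖) (add_nonneg cosineSup_nonneg hr) n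
    fun i _ => hcontract (K₀ + i) (Nat.le_add_right _ _)

end LinearRate

section Blocks

variable {N d : ℕ}

lemma nrmOp_apply (q : Vsp N d) (j : Fin N) : nrmOp q j = ‖q j‖⁻¹ • q j := by
  by_cases hq : q j = 0 <;> simp [nrmOp, hq]

lemma vanishingOn_starProjection_apply (s : Set (Fin N)) (x : Vsp N d) (j : Fin N) :
    (vanishingOn (d := d) s).starProjection x j = if j ∈ s then 0 else x j := by
  set y : Vsp N d := WithLp.toLp 2 (fun j => if j ∈ s then 0 else x j)
  have hy : y ∈ vanishingOn s := fun j hj => by simp [y, hj]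
  have horth : ∀ w ∈ vanishingOn s, ⟪x - y, w⟫ = 0 := by
    intro w hw
    rw [PiLp.inner_apply]
    refine Finset.sum_eq_zero fun i _ => ?_
    by_cases hi : i ∈ s
    · simp [hw i hi]
    · simp [y, hi]
  rw [(vanishingOn s).eq_starProjection_of_mem_of_inner_eq_zero hy horth]

/-- The paper's set `Q`, with `s` the complement of the support. -/
def shrinkRegion (τ : ℝ) (s : Set (Fin N)) : Set (Vsp N d) :=
  {q | ∀ j, (j ∈ s → ‖q j‖ ≤ τ) ∧ (j ∉ s → τ < ‖q j‖)}

lemma shrink_eq_starProjection {τ : ℝ} {s : Set (Fin N)} {q : Vsp N d}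
    (hq : q ∈ shrinkRegion τ s) :
    shrink τ q = (vanishingOn s).starProjection (q - τ • nrmOp q) := by
  ext j : 1
  rw [vanishingOn_starProjection_apply]
  by_cases hj : j ∈ s
  · simp [shrink, (hq j).1 hj, hj]
  · simp [shrink, not_le.2 ((hq j).2 hj), hj, nrmOp_apply, div_eq_mul_inv, smul_smul]

lemma eventually_mem_shrinkRegion {ι : Type*} {l : Filter ι} {τ : ℝ} {s : Set (Fin N)}
    {q : ι → Vsp N d} {q' : Vsp N d} (hq : Tendsto q l (𝓝 q'))
    (hin : ∀ j ∈ s, ‖q' j‖ < τ) (hout : ∀ j ∉ s, τ < ‖q' j‖) :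
    ∀ᶠ i in l, q i ∈ shrinkRegion τ s := by
  have hblock : ∀ j, Tendsto (fun i => ‖q i j‖) l (𝓝 ‖q' j‖) := fun j =>
    (((PiLp.continuous_apply 2 _ j).tendsto q').comp hq).norm
  simp only [shrinkRegion, Set.mem_ofPred_eq, eventually_all]
  intro j
  by_cases hj : j ∈ s
  · filter_upwards [(hblock j).eventually_lt_const (hin j hj)] with i hi
    exact ⟨fun _ => hi.le, fun h => absurd hj h⟩
  · filter_upwards [(hblock j).eventually_const_lt (hout j hj)] with i hi
    exact ⟨fun h => absurd h hj, fun _ => hi⟩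

lemma norm_smul_starProjection_nrmOp_sub_le {s : Set (Fin N)} {τ μ : ℝ} (hτ : 0 ≤ τ)
    (hμ : 0 < μ) (q : Vsp N d) {q' : Vsp N d} (hq' : ∀ j ∉ s, μ ≤ ‖q' j‖) :
    ‖τ • (vanishingOn s).starProjection (nrmOp q - nrmOp q')‖ ≤ 2 * τ / μ * ‖q - q'‖ := by
  rw [norm_smul, Real.norm_of_nonneg hτ, show 2 * τ / μ * ‖q - q'‖ = τ * (2 / μ * ‖q - q'‖) by ring]
  refine mul_le_mul_of_nonneg_left
    (norm_le_mul_norm_of_forall_norm_apply_le (by positivity) fun j => ?_) hτ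
  rw [vanishingOn_starProjection_apply]
  split_ifs with hj
  · simp only [norm_zero]; positivity
  have hq'j : q' j ≠ 0 := norm_pos_iff.1 (hμ.trans_le (hq' j hj))
  rw [PiLp.sub_apply, PiLp.sub_apply, nrmOp_apply, nrmOp_apply, norm_sub_rev, norm_sub_rev (q j)]
  calc _ ≤ 2 * ‖q' j - q j‖ / ‖q' j‖ := norm_inv_smul_sub_inv_smul_le hq'j (q j)
    _ ≤ 2 * ‖q' j - q j‖ / μ := by gcongr; exact hq' j hj
    _ = 2 / μ * ‖q' j - q j‖ := by ring

end Blocks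

section DouglasRachfordBlocks

variable {N d : ℕ} {τ : ℝ} {s : Set (Fin N)}

lemma norm_add_smul_apply_and_nrmOp_apply (hτ : 0 ≤ τ) {v η : Vsp N d}
    (hη : ∀ j, v j ≠ 0 → η j = ‖v j‖⁻¹ • v j) {j : Fin N} (hj : v j ≠ 0) :
    ‖(v + τ • η) j‖ = ‖v j‖ + τ ∧ nrmOp (v + τ • η) j = η j := by
  have hblock : (v + τ • η) j = v j + τ • (‖v j‖⁻¹ • v j) := by simp [hη j hj]
  rw [nrmOp_apply, hblock, inv_norm_smul_add_smul_inv_norm_smul hj hτ,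
    norm_add_smul_inv_norm_smul hj hτ, hη j hj]
  exact ⟨rfl, rfl⟩

lemma norm_add_smul_apply_lt (hτ : 0 < τ) {v η : Vsp N d} (hη : ∀ j, v j = 0 → ‖η j‖ < 1) :
    ∀ j ∈ {j | v j = 0}, ‖(v + τ • η) j‖ < τ := fun j (hj : v j = 0) => by
  simpa [hj, norm_smul, abs_of_pos hτ] using mul_lt_of_lt_one_right hτ (hη j hj)

lemma vanishingOn_starProjection_sub_smul_nrmOp_eq (hτ : 0 ≤ τ) {v η : Vsp N d}
    (hη : ∀ j, v j ≠ 0 → η j = ‖v j‖⁻¹ • v j) :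
    (vanishingOn {j | v j = 0}).starProjection (v + τ • η - τ • nrmOp (v + τ • η)) = v := by
  ext j : 1
  rw [vanishingOn_starProjection_apply]
  split_ifs with hj
  · exact hj.symm
  · rw [PiLp.sub_apply, PiLp.smul_apply, (norm_add_smul_apply_and_nrmOp_apply hτ hη hj).2]
    simp

lemma drs_step_sub_eq {U : Submodule ℝ (Vsp N d)} [U.HasOrthogonalProjection]
    {P : Vsp N d → Vsp N d} {v q' : Vsp N d} (hP : ∀ x, P x = v + U.starProjection (x - v))
    (hq' : U.starProjection (q' - v) = 0)
    (hv : (vanishingOn s).starProjection (q' - τ • nrmOp q') = v) {q : Vsp N d}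
    (hq : q ∈ shrinkRegion τ s) :
    let W := vanishingOn (d := d) s
    let δ := τ • W.starProjection (nrmOp q - nrmOp q')
    P ((2 : ℝ) • shrink τ q - q) + q - shrink τ q - q'
      = U.starProjection (W.starProjection (q - q') - δ)
        + Uᗮ.starProjection ((q - q') - (W.starProjection (q - q') - δ)) := by
  intro W δ
  have hlin : shrink τ q - v = W.starProjection (q - q') - δ := by
    rw [shrink_eq_starProjection hq, ← hv]
    simp only [W, δ, map_sub, map_smul]
    module
  rw [drs_sub_fixedPoint_eq hP hq', hlin]

end DouglasRachfordBlocks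

theorem tv_cs_drs_local_linear_rate_general
    {N d : ℕ}
    {X Z : Type*} [NormedAddCommGroup X] [InnerProductSpace ℝ X]
    [NormedAddCommGroup Z] [InnerProductSpace ℝ Z]
    (K : X →ₗ[ℝ] Vsp N d) (A : X →ₗ[ℝ] Z) (b : Z)
    -- `P` is the metric projection onto the affine set `V_b = {K u : A u = b}`
    (P : Vsp N d → Vsp N d)
    (hP : ∀ q : Vsp N d, (∃ u, A u = b ∧ K u = P q) ∧
      ∀ v, (∃ u, A u = b ∧ K u = v) → ‖q - P q‖ ≤ ‖q - v‖)
    (τ : ℝ) (hτ : 0 < τ)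
    (vstar : Vsp N d)
    -- `v_* ∈ V_b`
    (hvb : ∃ u, A u = b ∧ K u = vstar)
    (η : Vsp N d)
    (hη1 : ∀ j, vstar j ≠ 0 → η j = ‖vstar j‖⁻¹ • vstar j)
    (hη2 : ∀ j, vstar j = 0 → ‖η j‖ < 1)
    -- `η` is orthogonal to `U = K(ker A)`
    (hη3 : ∀ u ∈ (LinearMap.ker A).map K, ⟪η, u⟫ = 0)
    (qstar : Vsp N d) (hqstar : qstar = vstar + τ • η)
    -- `μ = min_{j ∈ S} ‖(v_*)_j‖`
    (μ : ℝ) (hμ : IsLeast ((fun j => ‖vstar j‖) '' {j | vstar j ≠ 0}) μ)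
    -- `c = sup{⟨u, w⟩ : u ∈ U, w ∈ W, ‖u‖ = ‖w‖ = 1}` (with `sSup ∅ = 0` in ℝ)
    (c : ℝ)
    (hc : c = sSup {r : ℝ | ∃ u ∈ (LinearMap.ker A).map K,
        ∃ w ∈ vanishingOn (d := d) {j | vstar j = 0},
        ‖u‖ = 1 ∧ ‖w‖ = 1 ∧ r = ⟪u, w⟫})
    (q : ℕ → Vsp N d)
    -- `q_{k+1} = H_τ(q_k)` where `H_τ(q) = P(2 S_τ(q) − q) + q − S_τ(q)`
    (hrec : ∀ k, q (k + 1) =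
      P ((2 : ℝ) • shrink τ (q k) - q k) + q k - shrink τ (q k))
    (hlim : Filter.Tendsto q Filter.atTop (nhds qstar)) :
    ∃ K₀ : ℕ, ∀ k, K₀ ≤ k →
      ‖q k - qstar‖ ≤ (c + 2 * τ / μ) ^ (k - K₀) * ‖q K₀ - qstar‖ := by
  set U := (LinearMap.ker A).map K
  set W := vanishingOn (d := d) {j | vstar j = 0}
  obtain ⟨⟨j₀, hj₀, hμ₀⟩, hμle⟩ := hμ
  have hμpos : 0 < μ := hμ₀ ▸ norm_pos_iff.2 hj₀
  obtain ⟨u₀, hu₀, hvstar⟩ := hvb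
  have hsupp : ∀ j, vstar j ≠ 0 → ‖qstar j‖ = ‖vstar j‖ + τ := fun j hj =>
    hqstar ▸ (norm_add_smul_apply_and_nrmOp_apply hτ.le hη1 hj).1
  have hηU : U.starProjection (qstar - vstar) = 0 := by
    rw [hqstar, add_sub_cancel_left, map_smul,
      U.starProjection_apply_eq_zero_iff.2 ((U.mem_orthogonal' η).2 hη3), smul_zero]
  have hPform : ∀ x, P x = vstar + U.starProjection (x - vstar) :=
    hvstar ▸ eq_add_starProjection_of_isMetricProjection K A hP hu₀
  obtain ⟨K₀, hK₀⟩ := eventually_atTop.1 <| eventually_mem_shrinkRegion hlim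
    (hqstar ▸ norm_add_smul_apply_lt hτ hη2) fun j hj => by
      rw [hsupp j hj]; linarith [norm_pos_iff.2 hj]
  refine ⟨K₀, hc ▸ norm_le_pow_mul_of_linearizedStep (U := U) (W := W)
    (δ := fun k => τ • W.starProjection (nrmOp (q k) - nrmOp qstar)) (by positivity)
    (by simpa using hlim.sub_const qstar) (fun k _ => W.smul_mem τ (W.starProjection_apply_mem _))
    (fun k _ => norm_smul_starProjection_nrmOp_sub_le hτ.le hμpos (q k)
      fun j hj => (hμle ⟨j, hj, rfl⟩).trans (hsupp j hj ▸ le_add_of_nonneg_right hτ.le))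
    fun k hk => ?_⟩
  rw [hrec]
  exact drs_step_sub_eq hPform hηU (hqstar ▸ vanishingOn_starProjection_sub_smul_nrmOp_eq hτ.le hη1)
    (hK₀ k hk)

/-- Local linear rate of Douglas–Rachford splitting (≡ ADMM) for isotropic
TV compressed sensing: if the iterates converge to an interior fixed point
`q_* = v_* + τη` (with `η` a dual certificate), then eventually
`‖q_k − q_*‖ ≤ (c + 2τ/μ)^{k−K} ‖q_K − q_*‖`. -/
theorem tv_cs_drs_local_linear_rate
    {N d : ℕ} (hN : 0 < N) (hd : 0 < d)
    {X Z : Type*} [NormedAddCommGroup X] [InnerProductSpace ℝ X] [FiniteDimensional ℝ X]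
    [NormedAddCommGroup Z] [InnerProductSpace ℝ Z] [FiniteDimensional ℝ Z]
    (K : X →ₗ[ℝ] Vsp N d) (A : X →ₗ[ℝ] Z) (b : Z) (hb : ∃ u, A u = b)
    -- `P` is the metric projection onto the affine set `V_b = {K u : A u = b}`
    (P : Vsp N d → Vsp N d)
    (hP : ∀ q : Vsp N d, (∃ u, A u = b ∧ K u = P q) ∧
      ∀ v, (∃ u, A u = b ∧ K u = v) → ‖q - P q‖ ≤ ‖q - v‖)
    (τ : ℝ) (hτ : 0 < τ)
    (vstar : Vsp N d)
    -- the support `S = {j : (v_*)_j ≠ 0}` is nonempty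
    (hS : ∃ j, vstar j ≠ 0)
    -- `v_* ∈ V_b`
    (hvb : ∃ u, A u = b ∧ K u = vstar)
    (η : Vsp N d)
    (hη1 : ∀ j, vstar j ≠ 0 → η j = ‖vstar j‖⁻¹ • vstar j)
    (hη2 : ∀ j, vstar j = 0 → ‖η j‖ < 1)
    -- `η` is orthogonal to `U = K(ker A)`
    (hη3 : ∀ u ∈ (LinearMap.ker A).map K, ⟪η, u⟫ = 0)
    (qstar : Vsp N d) (hqstar : qstar = vstar + τ • η)
    -- `μ = min_{j ∈ S} ‖(v_*)_j‖`
    (μ : ℝ) (hμ : IsLeast ((fun j => ‖vstar j‖) '' {j | vstar j ≠ 0}) μ)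
    -- `c = sup{⟨u, w⟩ : u ∈ U, w ∈ W, ‖u‖ = ‖w‖ = 1}` (with `sSup ∅ = 0` in ℝ)
    (c : ℝ)
    (hc : c = sSup {r : ℝ | ∃ u ∈ (LinearMap.ker A).map K,
        ∃ w ∈ vanishingOn (d := d) {j | vstar j = 0},
        ‖u‖ = 1 ∧ ‖w‖ = 1 ∧ r = ⟪u, w⟫})
    (q : ℕ → Vsp N d)
    -- `q_{k+1} = H_τ(q_k)` where `H_τ(q) = P(2 S_τ(q) − q) + q − S_τ(q)`
    (hrec : ∀ k, q (k + 1) =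
      P ((2 : ℝ) • shrink τ (q k) - q k) + q k - shrink τ (q k))
    (hlim : Filter.Tendsto q Filter.atTop (nhds qstar)) :
    ∃ K₀ : ℕ, ∀ k, K₀ ≤ k →
      ‖q k - qstar‖ ≤ (c + 2 * τ / μ) ^ (k - K₀) * ‖q K₀ - qstar‖ :=
  tv_cs_drs_local_linear_rate_general K A b P hP τ hτ vstar hvb η hη1 hη2 hη3 qstar hqstar μ hμ c hc
    q hrec hlim
end
end

section
/- Assume v_* ∈ V_b and v_* is the unique minimizer of the isotropic (1,2)-norm f over V_b (i.e., f(v_*) < f(v) for every v ∈ V_b with v ≠ v_*). Then for τ > 0, a point q ∈ V satisfies H_τ(q) = q if and only if there exists η ∈ V such that q = v_* + τη, η is orthogonal to U = K(ker A), and f(w) ≥ f(v_*) + ⟨η, w − v_*⟩ for all w ∈ V (i.e., η is a subgradient of f at v_*). -/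
open scoped RealInnerProductSpace
open scoped Classical

noncomputable section

/-!
Fixed points of `H_τ` are the points `q` with `P(2 S_τ q - q) = S_τ q`. Writing `s = S_τ q`, this
says that `s ∈ V_b` and `q - s ⊥ U`. Shrinkage is the proximal map of `τ f`, so `(q - s) / τ` is a
subgradient of `f` at `s`; a subgradient orthogonal to `U` at a point of `V_b` makes that point a
minimizer of `f` over `V_b`, hence `s = v_*`. Conversely, if `η ⊥ U` is a subgradient at `v_*`,
then `S_τ (v_* + τ η) = v_*` because a proximal point is unique (monotonicity of subgradients),
and `v_* ∈ V_b` with `(2 v_* - q) - v_* = -τ η ⊥ U` gives `P(2 v_* - q) = v_*`.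
-/

section Subgradient

variable {F : Type*} [NormedAddCommGroup F] [InnerProductSpace ℝ F]

def HasSubgradientAt (f : F → ℝ) (η v : F) : Prop :=
  ∀ w, f w ≥ f v + ⟪η, w - v⟫

theorem HasSubgradientAt.inner_sub_nonneg {f : F → ℝ} {η η' v v' : F}
    (h : HasSubgradientAt f η v) (h' : HasSubgradientAt f η' v') :
    0 ≤ ⟪η - η', v - v'⟫ := by
  have h₁ := h v'
  have h₂ := h' v
  rw [← neg_sub v v', inner_neg_right] at h₁
  rw [inner_sub_left]
  linarith

theorem HasSubgradientAt.eq_of_prox {f : F → ℝ} {τ : ℝ} (hτ : 0 < τ) {q v v' : F}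
    (h : HasSubgradientAt f (τ⁻¹ • (q - v)) v) (h' : HasSubgradientAt f (τ⁻¹ • (q - v')) v') :
    v = v' := by
  have hmono := h.inner_sub_nonneg h'
  rw [← smul_sub, sub_sub_sub_cancel_left, real_inner_smul_left, ← neg_sub v v',
    inner_neg_left, real_inner_self_eq_norm_sq] at hmono
  have : ‖v - v'‖ ^ 2 ≤ 0 := by nlinarith [inv_pos.mpr hτ]
  simpa [sub_eq_zero] using le_antisymm this (sq_nonneg _)

theorem hasSubgradientAt_norm {η v : F} (h₁ : ‖η‖ ≤ 1) (h₂ : ⟪η, v⟫ = ‖v‖) :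
    HasSubgradientAt (‖·‖) η v := by
  intro w
  have : ⟪η, w⟫ ≤ ‖w‖ :=
    (real_inner_le_norm η w).trans (mul_le_of_le_one_left (norm_nonneg w) h₁)
  rw [inner_sub_right, h₂]
  linarith

theorem HasSubgradientAt.piLp_sum {ι : Type*} [Fintype ι] {E : ι → Type*}
    [∀ i, NormedAddCommGroup (E i)] [∀ i, InnerProductSpace ℝ (E i)]
    {f : ∀ i, E i → ℝ} {η v : PiLp 2 E} (h : ∀ i, HasSubgradientAt (f i) (η i) (v i)) :
    HasSubgradientAt (fun w : PiLp 2 E => ∑ i, f i (w i)) η v := by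
  intro w
  rw [PiLp.inner_apply, ← Finset.sum_add_distrib]
  exact Finset.sum_le_sum fun i _ => h i (w i)

end Subgradient

section Shrinkage

variable {E : Type*} [NormedAddCommGroup E] [InnerProductSpace ℝ E]

def softThreshold (τ : ℝ) (x : E) : E :=
  if ‖x‖ ≤ τ then 0 else x - (τ / ‖x‖) • x

theorem hasSubgradientAt_norm_softThreshold {τ : ℝ} (hτ : 0 < τ) (x : E) :
    HasSubgradientAt (‖·‖) (τ⁻¹ • (x - softThreshold τ x)) (softThreshold τ x) := by
  unfold softThreshold
  split_ifs with hx
  · refine hasSubgradientAt_norm ?_ (by simp)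
    rw [sub_zero, norm_smul, norm_inv, Real.norm_of_nonneg hτ.le, inv_mul_le_one₀ hτ]
    exact hx
  · have hx₀ : 0 < ‖x‖ := hτ.trans (not_le.mp hx)
    have hη : τ⁻¹ • (x - (x - (τ / ‖x‖) • x)) = ‖x‖⁻¹ • x := by
      rw [sub_sub_cancel, smul_smul, div_eq_mul_inv, inv_mul_cancel_left₀ hτ.ne']
    rw [hη]
    refine hasSubgradientAt_norm
      (by rw [norm_smul, norm_inv, norm_norm, inv_mul_cancel₀ hx₀.ne']) ?_
    have hs : x - (τ / ‖x‖) • x = (1 - τ / ‖x‖) • x := by rw [sub_smul, one_smul]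
    have hc : 0 ≤ 1 - τ / ‖x‖ := by
      rw [sub_nonneg, div_le_one hx₀]; exact (not_le.mp hx).le
    rw [hs, real_inner_smul_left, real_inner_smul_right, real_inner_self_eq_norm_sq, norm_smul,
      Real.norm_of_nonneg hc]
    field_simp

variable {N d : ℕ}

theorem shrink_apply (τ : ℝ) (q : Vsp N d) (j : Fin N) :
    shrink τ q j = softThreshold τ (q j) :=
  rfl

theorem hasSubgradientAt_shrink {τ : ℝ} (hτ : 0 < τ) (q : Vsp N d) :
    HasSubgradientAt (fun w : Vsp N d => ∑ j, ‖w j‖) (τ⁻¹ • (q - shrink τ q)) (shrink τ q) :=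
  HasSubgradientAt.piLp_sum fun j => by
    simpa only [PiLp.smul_apply, PiLp.sub_apply, shrink_apply]
      using hasSubgradientAt_norm_softThreshold hτ (q j)

theorem shrink_add_smul_eq {τ : ℝ} (hτ : 0 < τ) {v η : Vsp N d}
    (h : HasSubgradientAt (fun w : Vsp N d => ∑ j, ‖w j‖) η v) :
    shrink τ (v + τ • η) = v := by
  refine (hasSubgradientAt_shrink hτ _).eq_of_prox hτ ?_
  rwa [add_sub_cancel_left, smul_smul, inv_mul_cancel₀ hτ.ne', one_smul]

end Shrinkage

section Projection

variable {F : Type*} [NormedAddCommGroup F] [InnerProductSpace ℝ F]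

def IsMetricProjection (S : Set F) (P : F → F) : Prop :=
  ∀ x, P x ∈ S ∧ ∀ v ∈ S, ‖x - P x‖ ≤ ‖x - v‖

theorem IsMetricProjection.apply_eq_iff {U : Submodule ℝ F} [U.HasOrthogonalProjection]
    {v₀ : F} {P : F → F} (hP : IsMetricProjection {v | v - v₀ ∈ U} P) {x v : F} :
    P x = v ↔ v - v₀ ∈ U ∧ x - v ∈ Uᗮ := by
  -- By Pythagoras, a point `v` of `v₀ + U` with `x - v ⊥ U` is strictly nearer than any other.
  have nearest : ∀ v, v - v₀ ∈ U → x - v ∈ Uᗮ → P x = v := by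
    intro v hv hxv
    have hdiff : v - P x ∈ U := by
      simpa only [sub_sub_sub_cancel_right] using U.sub_mem hv (hP x).1
    have hpyth := norm_add_sq_eq_norm_sq_add_norm_sq_real
      ((U.mem_orthogonal' _).mp hxv _ hdiff)
    rw [sub_add_sub_cancel] at hpyth
    have hle := (hP x).2 v hv
    have : ‖v - P x‖ ^ 2 ≤ 0 := by nlinarith [norm_nonneg (x - P x), norm_nonneg (x - v)]
    simpa [sub_eq_zero, eq_comm] using le_antisymm this (sq_nonneg _)
  constructor
  · rintro rfl
    have hp : x - (v₀ + U.starProjection (x - v₀)) ∈ Uᗮ := by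
      rw [← sub_sub]; exact U.sub_starProjection_mem_orthogonal _
    have := nearest _ (by rw [add_sub_cancel_left]; exact U.starProjection_apply_mem _) hp
    exact ⟨(hP x).1, this ▸ hp⟩
  · exact fun ⟨hv, hxv⟩ => nearest v hv hxv

theorem exists_eq_and_map_eq_iff {X Z : Type*} [AddCommGroup X] [Module ℝ X] [AddCommGroup Z]
    [Module ℝ Z] {K : X →ₗ[ℝ] F} {A : X →ₗ[ℝ] Z} {b : Z} {u₀ : X} {v₀ : F}
    (hu₀ : A u₀ = b) (hv₀ : K u₀ = v₀) (v : F) :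
    (∃ u, A u = b ∧ K u = v) ↔ v - v₀ ∈ (LinearMap.ker A).map K := by
  constructor
  · rintro ⟨u, hu, rfl⟩
    exact ⟨u - u₀, by simp [hu, hu₀], by simp [hv₀]⟩
  · rintro ⟨w, hw, hKw⟩
    refine ⟨u₀ + w, by simp [hu₀, LinearMap.mem_ker.mp hw], ?_⟩
    rw [map_add, hKw, hv₀, add_sub_cancel]

end Projection

theorem tv_cs_drs_fixed_point_iff_dual_certificate_general
    {N d : ℕ}
    {X Z : Type*} [NormedAddCommGroup X] [InnerProductSpace ℝ X]
    [NormedAddCommGroup Z] [InnerProductSpace ℝ Z]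
    (K : X →ₗ[ℝ] Vsp N d) (A : X →ₗ[ℝ] Z) (b : Z)
    -- `P` is the metric projection onto the affine set `V_b = {K u : A u = b}`
    (P : Vsp N d → Vsp N d)
    (hP : ∀ q : Vsp N d, (∃ u, A u = b ∧ K u = P q) ∧
      ∀ v, (∃ u, A u = b ∧ K u = v) → ‖q - P q‖ ≤ ‖q - v‖)
    (τ : ℝ) (hτ : 0 < τ)
    (vstar : Vsp N d)
    -- `v_* ∈ V_b`
    (hvb : ∃ u, A u = b ∧ K u = vstar)
    -- `v_*` is the unique minimizer of `f(v) = Σ_j ‖v_j‖` over `V_b`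
    (hmin : ∀ v : Vsp N d, (∃ u, A u = b ∧ K u = v) → v ≠ vstar →
      (∑ j, ‖vstar j‖) < ∑ j, ‖v j‖) :
    ∀ q : Vsp N d,
      P ((2 : ℝ) • shrink τ q - q) + q - shrink τ q = q ↔
        ∃ η : Vsp N d, q = vstar + τ • η ∧
          (∀ u ∈ (LinearMap.ker A).map K, ⟪η, u⟫ = 0) ∧
          (∀ w : Vsp N d, (∑ j, ‖w j‖) ≥ (∑ j, ‖vstar j‖) + ⟪η, w - vstar⟫) := by
  intro q
  set U := (LinearMap.ker A).map K
  obtain ⟨u₀, hu₀, hKu₀⟩ := hvb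
  have hVb := exists_eq_and_map_eq_iff hu₀ hKu₀
  have hPU : IsMetricProjection {v | v - vstar ∈ U} P := fun x =>
    ⟨(hVb _).mp (hP x).1, fun v hv => (hP x).2 v ((hVb v).mpr hv)⟩
  set s := shrink τ q
  have hfix : P ((2 : ℝ) • s - q) + q - s = q ↔ P ((2 : ℝ) • s - q) = s := by
    rw [add_sub_assoc, ← eq_sub_iff_add_eq, sub_sub_cancel]
  have hreflect : (2 : ℝ) • s - q - s = s - q := by module
  rw [hfix, hPU.apply_eq_iff, hreflect]
  constructor
  · rintro ⟨hsU, hqs⟩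
    set η := τ⁻¹ • (q - s)
    have hη : HasSubgradientAt (fun w : Vsp N d => ∑ j, ‖w j‖) η s := hasSubgradientAt_shrink hτ q
    have hηU : η ∈ Uᗮ := Uᗮ.smul_mem _ (by rw [← neg_sub]; exact Uᗮ.neg_mem hqs)
    have hs : s = vstar := by
      by_contra hne
      have hlt := hmin s ((hVb s).mpr hsU) hne
      have hzero : ⟪η, vstar - s⟫ = 0 := (U.mem_orthogonal' η).mp hηU _ (by
        rw [← neg_sub]; exact U.neg_mem hsU)
      linarith [hη vstar]
    refine ⟨η, ?_, (U.mem_orthogonal' η).mp hηU, hs ▸ hη⟩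
    rw [← hs, smul_smul, mul_inv_cancel₀ hτ.ne', one_smul, add_sub_cancel]
  · rintro ⟨η, rfl, hηU, hη⟩
    have hs : s = vstar := shrink_add_smul_eq hτ hη
    rw [hs]
    refine ⟨by simp, ?_⟩
    rw [sub_add_cancel_left]
    exact Uᗮ.neg_mem (Uᗮ.smul_mem τ ((U.mem_orthogonal' η).mpr hηU))

/-- Fixed-point characterization (Lemma 4.3 of the paper): if `v_*` is the
unique minimizer of the isotropic (1,2)-norm over `V_b`, then `q` is a fixed point of the
Douglas–Rachford operator `H_τ` iff `q = v_* + τη` for a dual certificate `η` (a subgradient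
of the (1,2)-norm at `v_*` orthogonal to `U = K(ker A)`). -/
theorem tv_cs_drs_fixed_point_iff_dual_certificate
    {N d : ℕ} (hN : 0 < N) (hd : 0 < d)
    {X Z : Type*} [NormedAddCommGroup X] [InnerProductSpace ℝ X] [FiniteDimensional ℝ X]
    [NormedAddCommGroup Z] [InnerProductSpace ℝ Z] [FiniteDimensional ℝ Z]
    (K : X →ₗ[ℝ] Vsp N d) (A : X →ₗ[ℝ] Z) (b : Z) (hb : ∃ u, A u = b)
    -- `P` is the metric projection onto the affine set `V_b = {K u : A u = b}`
    (P : Vsp N d → Vsp N d)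
    (hP : ∀ q : Vsp N d, (∃ u, A u = b ∧ K u = P q) ∧
      ∀ v, (∃ u, A u = b ∧ K u = v) → ‖q - P q‖ ≤ ‖q - v‖)
    (τ : ℝ) (hτ : 0 < τ)
    (vstar : Vsp N d)
    -- `v_* ∈ V_b`
    (hvb : ∃ u, A u = b ∧ K u = vstar)
    -- `v_*` is the unique minimizer of `f(v) = Σ_j ‖v_j‖` over `V_b`
    (hmin : ∀ v : Vsp N d, (∃ u, A u = b ∧ K u = v) → v ≠ vstar →
      (∑ j, ‖vstar j‖) < ∑ j, ‖v j‖) :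
    ∀ q : Vsp N d,
      P ((2 : ℝ) • shrink τ q - q) + q - shrink τ q = q ↔
        ∃ η : Vsp N d, q = vstar + τ • η ∧
          (∀ u ∈ (LinearMap.ker A).map K, ⟪η, u⟫ = 0) ∧
          (∀ w : Vsp N d, (∑ j, ‖w j‖) ≥ (∑ j, ‖vstar j‖) + ⟪η, w - vstar⟫) :=
  tv_cs_drs_fixed_point_iff_dual_certificate_general K A b P hP τ hτ vstar hvb hmin
end
end

section
/- Fix τ > 0 and v_* ∈ V with support S = {j : (v_*)_j ≠ 0}. For all q, q' ∈ Q, the Douglas–Rachford operator satisfies the identity H_τ(q) − H_τ(q') = (C ∘ P_S + (id − C) ∘ (id − P_S))(q − q') + τ (id − 2C)(P_S(𝒩(q)) − P_S(𝒩(q'))), where C is the orthogonal projection onto U = K(ker A) and P_S is the orthogonal projection onto W = {z ∈ V : z_j = 0 for all j ∉ S}. -/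
/-!
On `Q` every block either vanishes under `S_τ` or is shrunk by exactly `τ 𝒩(q)_j`, so
`S_τ q = P_S q - τ P_S 𝒩(q)` is affine in `(q, 𝒩 q)`. The metric projection onto the affine set
`V_b = K u₀ + U` is `v ↦ K u₀ + C (v - K u₀)`. Substituting both formulas into `H_τ`, the constant
`K u₀` cancels in the difference `H_τ(q) - H_τ(q')` and what remains is linear algebra.
-/

open scoped RealInnerProductSpace
open scoped Classical

noncomputable section

theorem Submodule.eq_add_starProjection_of_forall_norm_sub_le
    {F : Type*} [NormedAddCommGroup F] [InnerProductSpace ℝ F]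
    (U : Submodule ℝ F) [U.HasOrthogonalProjection] {v₀ x y : F} (hy : y - v₀ ∈ U)
    (hmin : ∀ w ∈ U, ‖x - y‖ ≤ ‖x - (v₀ + w)‖) :
    y = v₀ + U.starProjection (x - v₀) := by
  have hnorm : ‖x - v₀ - (y - v₀)‖ = ⨅ w : U, ‖x - v₀ - w‖ := by
    refine le_antisymm (le_ciInf fun w => ?_) (ciInf_le ⟨0, ?_⟩ (⟨y - v₀, hy⟩ : U))
    · simpa only [sub_sub_sub_cancel_right, sub_sub, add_sub_cancel] using hmin w w.2
    · rintro _ ⟨w, rfl⟩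
      exact norm_nonneg _
  rw [U.eq_starProjection_of_mem_of_inner_eq_zero hy
    ((U.norm_eq_iInf_iff_real_inner_eq_zero hy).1 hnorm), add_sub_cancel]

theorem LinearMap.exists_apply_eq_and_apply_eq_iff_sub_mem_map_ker
    {R X Y Z : Type*} [Ring R] [AddCommGroup X] [Module R X] [AddCommGroup Y] [Module R Y]
    [AddCommGroup Z] [Module R Z] (K : X →ₗ[R] Y) (A : X →ₗ[R] Z) {b : Z} {u₀ : X}
    (hu₀ : A u₀ = b) (v : Y) :
    (∃ u, A u = b ∧ K u = v) ↔ v - K u₀ ∈ (LinearMap.ker A).map K := by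
  constructor
  · rintro ⟨u, hu, rfl⟩
    exact ⟨u - u₀, by simp [hu, hu₀], map_sub K u u₀⟩
  · rintro ⟨w, hw, hKw⟩
    refine ⟨u₀ + w, by simp [hu₀, LinearMap.mem_ker.1 hw], ?_⟩
    rw [map_add, hKw, add_sub_cancel]

theorem starProjection_vanishingOn_apply {N d : ℕ} (s : Set (Fin N)) (z : Vsp N d) :
    (vanishingOn s).starProjection z = WithLp.toLp 2 (fun j => if j ∈ s then 0 else z j) := by
  refine Submodule.eq_starProjection_of_mem_of_inner_eq_zero (fun j hj => by simp [hj])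
    fun w hw => Finset.sum_eq_zero fun j _ => ?_
  by_cases hj : j ∈ s
  · simp [hw j hj]
  · simp [hj]

theorem shrink_eq_of_norm_le_of_lt {N d : ℕ} {τ : ℝ} {s : Set (Fin N)} {q : Vsp N d}
    (hle : ∀ j ∈ s, ‖q j‖ ≤ τ) (hlt : ∀ j ∉ s, τ < ‖q j‖) :
    shrink τ q =
      (vanishingOn s).starProjection q - τ • (vanishingOn s).starProjection (nrmOp q) := by
  rw [starProjection_vanishingOn_apply, starProjection_vanishingOn_apply]
  ext j : 2
  by_cases hj : j ∈ s
  · simp [shrink, hj, hle j hj]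
  · by_cases hq : q j = 0
    · simp [shrink, nrmOp, hj, hq]
    · simp [shrink, nrmOp, hj, hq, (hlt j hj).not_ge, div_eq_mul_inv, mul_smul]

theorem tv_cs_drs_difference_decomposition_general
    {N d : ℕ}
    {X Z : Type*} [NormedAddCommGroup X] [InnerProductSpace ℝ X]
    [NormedAddCommGroup Z] [InnerProductSpace ℝ Z]
    (K : X →ₗ[ℝ] Vsp N d) (A : X →ₗ[ℝ] Z) (b : Z)
    -- `P` is the metric projection onto the affine set `V_b = {K u : A u = b}`
    (P : Vsp N d → Vsp N d)
    (hP : ∀ q : Vsp N d, (∃ u, A u = b ∧ K u = P q) ∧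
      ∀ v, (∃ u, A u = b ∧ K u = v) → ‖q - P q‖ ≤ ‖q - v‖)
    (τ : ℝ)
    (vstar : Vsp N d)
    -- `C` is the orthogonal projection onto `U = K(ker A)`
    (C : Vsp N d →L[ℝ] Vsp N d)
    (hC : C = ((LinearMap.ker A).map K).subtypeL ∘L
      Submodule.orthogonalProjectionOnto ((LinearMap.ker A).map K))
    -- `P_S` is the orthogonal projection onto `W = {z : z_j = 0 for all j ∉ S}`
    (PS : Vsp N d →L[ℝ] Vsp N d)
    (hPS : PS = (vanishingOn (d := d) {j | vstar j = 0}).subtypeL ∘L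
      Submodule.orthogonalProjectionOnto (vanishingOn (d := d) {j | vstar j = 0})) :
    ∀ q q' : Vsp N d,
      (∀ j, (vstar j = 0 → ‖q j‖ ≤ τ) ∧ (vstar j ≠ 0 → τ < ‖q j‖)) →
      (∀ j, (vstar j = 0 → ‖q' j‖ ≤ τ) ∧ (vstar j ≠ 0 → τ < ‖q' j‖)) →
      (P ((2 : ℝ) • shrink τ q - q) + q - shrink τ q) -
          (P ((2 : ℝ) • shrink τ q' - q') + q' - shrink τ q') =
        (C (PS (q - q')) + (((q - q') - PS (q - q')) - C ((q - q') - PS (q - q')))) +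
          τ • ((PS (nrmOp q) - PS (nrmOp q')) -
            (2 : ℝ) • C (PS (nrmOp q) - PS (nrmOp q'))) := by
  intro q q' hq hq'
  obtain ⟨⟨u₀, hu₀, -⟩, -⟩ := hP 0
  have hVb := K.exists_apply_eq_and_apply_eq_iff_sub_mem_map_ker A hu₀
  have hPx (x : Vsp N d) : P x = K u₀ + C (x - K u₀) :=
    hC ▸ Submodule.eq_add_starProjection_of_forall_norm_sub_le _ ((hVb _).1 (hP x).1)
      fun w hw => (hP x).2 _ ((hVb _).2 (by rwa [add_sub_cancel_left]))
  have hS (p : Vsp N d) (hp : ∀ j, (vstar j = 0 → ‖p j‖ ≤ τ) ∧ (vstar j ≠ 0 → τ < ‖p j‖)) :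
      shrink τ p = PS p - τ • PS (nrmOp p) :=
    hPS ▸ shrink_eq_of_norm_le_of_lt (fun j hj => (hp j).1 hj) fun j hj => (hp j).2 hj
  rw [hS q hq, hS q' hq', hPx, hPx]
  simp only [map_sub, map_smul, smul_sub]
  module

/-- Lemma 4.5 of the paper: on the set `Q`, the Douglas–Rachford
operator decomposes as
`H_τ(q) − H_τ(q') = (C∘P_S + (id−C)∘(id−P_S))(q−q') + τ(id−2C)(P_S 𝒩(q) − P_S 𝒩(q'))`,
where `C` is the orthogonal projection onto `U = K(ker A)` and `P_S` the orthogonal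
projection onto `W = {z : z_j = 0 for all j ∉ S}`. -/
theorem tv_cs_drs_difference_decomposition
    {N d : ℕ} (hN : 0 < N) (hd : 0 < d)
    {X Z : Type*} [NormedAddCommGroup X] [InnerProductSpace ℝ X] [FiniteDimensional ℝ X]
    [NormedAddCommGroup Z] [InnerProductSpace ℝ Z] [FiniteDimensional ℝ Z]
    (K : X →ₗ[ℝ] Vsp N d) (A : X →ₗ[ℝ] Z) (b : Z) (hb : ∃ u, A u = b)
    -- `P` is the metric projection onto the affine set `V_b = {K u : A u = b}`
    (P : Vsp N d → Vsp N d)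
    (hP : ∀ q : Vsp N d, (∃ u, A u = b ∧ K u = P q) ∧
      ∀ v, (∃ u, A u = b ∧ K u = v) → ‖q - P q‖ ≤ ‖q - v‖)
    (τ : ℝ) (hτ : 0 < τ)
    (vstar : Vsp N d)
    -- `C` is the orthogonal projection onto `U = K(ker A)`
    (C : Vsp N d →L[ℝ] Vsp N d)
    (hC : C = ((LinearMap.ker A).map K).subtypeL ∘L
      Submodule.orthogonalProjectionOnto ((LinearMap.ker A).map K))
    -- `P_S` is the orthogonal projection onto `W = {z : z_j = 0 for all j ∉ S}`
    (PS : Vsp N d →L[ℝ] Vsp N d)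
    (hPS : PS = (vanishingOn (d := d) {j | vstar j = 0}).subtypeL ∘L
      Submodule.orthogonalProjectionOnto (vanishingOn (d := d) {j | vstar j = 0})) :
    ∀ q q' : Vsp N d,
      (∀ j, (vstar j = 0 → ‖q j‖ ≤ τ) ∧ (vstar j ≠ 0 → τ < ‖q j‖)) →
      (∀ j, (vstar j = 0 → ‖q' j‖ ≤ τ) ∧ (vstar j ≠ 0 → τ < ‖q' j‖)) →
      (P ((2 : ℝ) • shrink τ q - q) + q - shrink τ q) -
          (P ((2 : ℝ) • shrink τ q' - q') + q' - shrink τ q') =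
        (C (PS (q - q')) + (((q - q') - PS (q - q')) - C ((q - q') - PS (q - q')))) +
          τ • ((PS (nrmOp q) - PS (nrmOp q')) -
            (2 : ℝ) • C (PS (nrmOp q) - PS (nrmOp q'))) :=
  tv_cs_drs_difference_decomposition_general K A b P hP τ vstar C hC PS hPS
end
end

section
/- Let E be a finite-dimensional real inner product space and let U, W be subspaces of E with U ∩ W = {0}. Let P_U, P_W, P_{U⊥}, P_{W⊥} denote the orthogonal projections onto U, W, U^⊥, W^⊥ respectively, and set c = sup{⟨u, w⟩ : u ∈ U, w ∈ W, ‖u‖ = ‖w‖ = 1} (with c = 0 if U or W is the zero subspace). Then for every x ∈ E orthogonal to U^⊥ ∩ W^⊥, ‖P_U(P_W x) + P_{U⊥}(P_{W⊥} x)‖ ≤ c ‖x‖. Moreover, if additionally U^⊥ ∩ W^⊥ = {0}, then the operator norm of x ↦ P_U(P_W x) + P_{U⊥}(P_{W⊥} x) equals c. -/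
open scoped RealInnerProductSpace

noncomputable section

/-!
On `W` the operator `P_U P_W + P_{U⊥} P_{W⊥}` acts as `P_U`, on `W⊥` as `P_{U⊥}`, and these two
pieces have orthogonal ranges. So it suffices to show `‖P_U w‖ ≤ c‖w‖` for `w ∈ W`, which is the
definition of `c`, and `‖P_{U⊥} b‖ ≤ c‖b‖` for `b ∈ W⊥` orthogonal to `U⊥ ∩ W⊥`. Such a `b` is
`P_{W⊥} u` for some `u ∈ U`, and then `‖b‖² = ⟪P_U b, u⟫ ≤ ‖P_U b‖‖u‖` while
`‖b‖² = ‖u‖² - ‖P_W u‖² ≥ (1 - c²)‖u‖²`; together, `‖P_U b‖² ≥ (1 - c²)‖b‖²`.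
Conversely `⟪u, w⟫ = ⟪u, P_U w⟫ ≤ ‖P_U w‖` for unit vectors, so the operator norm is at least `c`.
-/

namespace Submodule

variable {E : Type*} [NormedAddCommGroup E] [InnerProductSpace ℝ E]

/-- The cosine of the smallest principal angle between `U` and `W`; it is `0` when `U` or `W`
is trivial, since then the supremum is over the empty set. -/
def cosMinPrincipalAngle (U W : Submodule ℝ E) : ℝ :=
  sSup {r : ℝ | ∃ u ∈ U, ∃ w ∈ W, ‖u‖ = 1 ∧ ‖w‖ = 1 ∧ r = ⟪u, w⟫}

section cosMinPrincipalAngle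

variable (U W : Submodule ℝ E)

theorem cosMinPrincipalAngle_comm : cosMinPrincipalAngle U W = cosMinPrincipalAngle W U := by
  unfold cosMinPrincipalAngle
  congr 1
  ext r
  constructor <;>
  · rintro ⟨u, hu, w, hw, hu1, hw1, rfl⟩
    exact ⟨w, hw, u, hu, hw1, hu1, real_inner_comm _ _⟩

variable {U W}

theorem inner_le_cosMinPrincipalAngle {u w : E} (hu : u ∈ U) (hw : w ∈ W) (hu1 : ‖u‖ = 1)
    (hw1 : ‖w‖ = 1) : ⟪u, w⟫ ≤ cosMinPrincipalAngle U W := by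
  refine le_csSup ⟨1, ?_⟩ ⟨u, hu, w, hw, hu1, hw1, rfl⟩
  rintro _ ⟨u, -, w, -, hu1, hw1, rfl⟩
  simpa [hu1, hw1] using real_inner_le_norm u w

variable (U W) in
theorem cosMinPrincipalAngle_nonneg : 0 ≤ cosMinPrincipalAngle U W := by
  by_cases h : ∃ u ∈ U, ∃ w ∈ W, ‖u‖ = 1 ∧ ‖w‖ = 1
  · obtain ⟨u, hu, w, hw, hu1, hw1⟩ := h
    have h₁ := inner_le_cosMinPrincipalAngle hu hw hu1 hw1
    have h₂ := inner_le_cosMinPrincipalAngle (neg_mem hu) hw (by rwa [norm_neg]) hw1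
    rw [inner_neg_left] at h₂
    linarith
  · refine Real.sSup_nonneg ?_
    rintro _ ⟨u, hu, w, hw, hu1, hw1, -⟩
    exact (h ⟨u, hu, w, hw, hu1, hw1⟩).elim

theorem inner_le_cosMinPrincipalAngle_mul {u w : E} (hu : u ∈ U) (hw : w ∈ W) :
    ⟪u, w⟫ ≤ cosMinPrincipalAngle U W * ‖u‖ * ‖w‖ := by
  rcases eq_or_ne u 0 with rfl | hu0
  · simp
  rcases eq_or_ne w 0 with rfl | hw0
  · simp
  have h := inner_le_cosMinPrincipalAngle (smul_mem U ‖u‖⁻¹ hu) (smul_mem W ‖w‖⁻¹ hw)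
    (norm_smul_inv_norm hu0) (norm_smul_inv_norm hw0)
  rw [real_inner_smul_left, real_inner_smul_right, ← mul_assoc, ← mul_inv,
    inv_mul_le_iff₀ (by positivity)] at h
  linarith

theorem norm_starProjection_le_cosMinPrincipalAngle_mul [U.HasOrthogonalProjection] {w : E}
    (hw : w ∈ W) : ‖U.starProjection w‖ ≤ cosMinPrincipalAngle U W * ‖w‖ := by
  rcases eq_or_ne (U.starProjection w) 0 with h | h
  · rw [h, norm_zero]
    exact mul_nonneg (cosMinPrincipalAngle_nonneg U W) (norm_nonneg w)
  have hsq : ‖U.starProjection w‖ * ‖U.starProjection w‖ ≤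
      ‖U.starProjection w‖ * (cosMinPrincipalAngle U W * ‖w‖) := calc
    _ = ⟪U.starProjection w, w⟫ := by simpa [sq] using (U.re_inner_starProjection_eq_normSq w).symm
    _ ≤ _ := inner_le_cosMinPrincipalAngle_mul (U.starProjection_apply_mem w) hw
    _ = _ := by ring
  exact le_of_mul_le_mul_left hsq (norm_pos_iff.2 h)

end cosMinPrincipalAngle

section douglasRachford

variable (U W : Submodule ℝ E) [U.HasOrthogonalProjection] [W.HasOrthogonalProjection]

def douglasRachford : E →L[ℝ] E :=
  U.starProjection ∘L W.starProjection + Uᗮ.starProjection ∘L Wᗮ.starProjection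

theorem douglasRachford_apply (x : E) : douglasRachford U W x =
    U.starProjection (W.starProjection x) + Uᗮ.starProjection (Wᗮ.starProjection x) :=
  rfl

variable {U W} in
theorem douglasRachford_apply_of_mem {w : E} (hw : w ∈ W) :
    douglasRachford U W w = U.starProjection w := by
  simp [douglasRachford, starProjection_eq_self_iff.2 hw,
    (starProjection_apply_eq_zero_iff _).2 (le_orthogonal_orthogonal W hw)]

theorem cosMinPrincipalAngle_le_norm_douglasRachford :
    cosMinPrincipalAngle U W ≤ ‖douglasRachford U W‖ := by
  refine Real.sSup_le ?_ (norm_nonneg _)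
  rintro _ ⟨u, hu, w, hw, hu1, hw1, rfl⟩
  calc ⟪u, w⟫ = ⟪u, U.starProjection w⟫ := by
        rw [← inner_starProjection_left_eq_right, starProjection_eq_self_iff.2 hu]
    _ ≤ ‖u‖ * ‖U.starProjection w‖ := real_inner_le_norm _ _
    _ = ‖douglasRachford U W w‖ := by rw [douglasRachford_apply_of_mem hw, hu1, one_mul]
    _ ≤ ‖douglasRachford U W‖ := by simpa [hw1] using (douglasRachford U W).le_opNorm w

end douglasRachford

section FiniteDimensional

variable [FiniteDimensional ℝ E] (U W : Submodule ℝ E)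

theorem inf_orthogonal_le_map_starProjection :
    Wᗮ ⊓ (Uᗮ ⊓ Wᗮ)ᗮ ≤ U.map (Wᗮ.starProjection : E →ₗ[ℝ] E) := by
  rintro b ⟨hbW, hbZ⟩
  rw [← orthogonal_orthogonal (U.map (Wᗮ.starProjection : E →ₗ[ℝ] E))]
  intro y hy
  have hyZ : Wᗮ.starProjection y ∈ Uᗮ ⊓ Wᗮ := by
    refine ⟨fun u hu => ?_, Wᗮ.starProjection_apply_mem y⟩
    rw [← inner_starProjection_left_eq_right]
    exact inner_right_of_mem_orthogonal (mem_map_of_mem hu) hy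
  calc ⟪y, b⟫ = ⟪y, Wᗮ.starProjection b⟫ := by rw [starProjection_eq_self_iff.2 hbW]
    _ = ⟪Wᗮ.starProjection y, b⟫ := (inner_starProjection_left_eq_right _ _ _).symm
    _ = 0 := inner_right_of_mem_orthogonal hyZ hbZ

variable {U W}

theorem norm_sq_starProjection_orthogonal_le {s : ℝ}
    (hs : ∀ u ∈ U, ‖W.starProjection u‖ ^ 2 ≤ s * ‖u‖ ^ 2) {b : E} (hbW : b ∈ Wᗮ)
    (hbZ : b ∈ (Uᗮ ⊓ Wᗮ)ᗮ) : ‖Uᗮ.starProjection b‖ ^ 2 ≤ s * ‖b‖ ^ 2 := by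
  obtain ⟨u, hu, hub⟩ := inf_orthogonal_le_map_starProjection U W ⟨hbW, hbZ⟩
  rw [ContinuousLinearMap.coe_coe] at hub
  have hb : ‖b‖ ^ 2 ≤ ‖U.starProjection b‖ * ‖u‖ := calc
    ‖b‖ ^ 2 = ⟪b, Wᗮ.starProjection u⟫ := by rw [hub, real_inner_self_eq_norm_sq]
    _ = ⟪b, U.starProjection u⟫ := by
      rw [← inner_starProjection_left_eq_right, starProjection_eq_self_iff.2 hbW,
        starProjection_eq_self_iff.2 hu]
    _ = ⟪U.starProjection b, u⟫ := (inner_starProjection_left_eq_right _ _ _).symm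
    _ ≤ _ := real_inner_le_norm _ _
  have hcos : (1 - s) * ‖u‖ ^ 2 ≤ ‖b‖ ^ 2 := by
    have := norm_sq_eq_add_norm_sq_starProjection u W
    rw [hub] at this
    linarith [hs u hu]
  suffices (1 - s) * ‖b‖ ^ 2 ≤ ‖U.starProjection b‖ ^ 2 by
    linarith [norm_sq_eq_add_norm_sq_starProjection b U]
  rcases le_or_gt (1 - s) 0 with hs1 | hs1
  · nlinarith
  rcases (sq_nonneg ‖b‖).eq_or_lt with hb0 | hb0
  · rw [← hb0, mul_zero]
    positivity
  refine le_of_mul_le_mul_right ?_ hb0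
  calc (1 - s) * ‖b‖ ^ 2 * ‖b‖ ^ 2 = (1 - s) * (‖b‖ ^ 2) ^ 2 := by ring
    _ ≤ (1 - s) * (‖U.starProjection b‖ * ‖u‖) ^ 2 := by gcongr
    _ = ‖U.starProjection b‖ ^ 2 * ((1 - s) * ‖u‖ ^ 2) := by ring
    _ ≤ ‖U.starProjection b‖ ^ 2 * ‖b‖ ^ 2 := by gcongr

theorem norm_douglasRachford_apply_le {x : E} (hx : x ∈ (Uᗮ ⊓ Wᗮ)ᗮ) :
    ‖douglasRachford U W x‖ ≤ cosMinPrincipalAngle U W * ‖x‖ := by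
  set c := cosMinPrincipalAngle U W with hc
  have hxW : Wᗮ.starProjection x ∈ (Uᗮ ⊓ Wᗮ)ᗮ := by
    rw [starProjection_orthogonal_val]
    exact sub_mem hx (orthogonal_le inf_le_right
      (le_orthogonal_orthogonal W (W.starProjection_apply_mem x)))
  have h₁ : ‖U.starProjection (W.starProjection x)‖ ^ 2 ≤ c ^ 2 * ‖W.starProjection x‖ ^ 2 := by
    rw [← mul_pow]
    gcongr
    exact norm_starProjection_le_cosMinPrincipalAngle_mul (W.starProjection_apply_mem x)
  have h₂ : ‖Uᗮ.starProjection (Wᗮ.starProjection x)‖ ^ 2 ≤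
      c ^ 2 * ‖Wᗮ.starProjection x‖ ^ 2 := by
    refine norm_sq_starProjection_orthogonal_le (fun u hu => ?_)
      (Wᗮ.starProjection_apply_mem x) hxW
    rw [← mul_pow, hc, cosMinPrincipalAngle_comm]
    gcongr
    exact norm_starProjection_le_cosMinPrincipalAngle_mul hu
  have horth : ⟪U.starProjection (W.starProjection x), Uᗮ.starProjection (Wᗮ.starProjection x)⟫
      = 0 := inner_right_of_mem_orthogonal (U.starProjection_apply_mem _)
        (Uᗮ.starProjection_apply_mem _)
  rw [← pow_le_pow_iff_left₀ (norm_nonneg _)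
    (mul_nonneg (cosMinPrincipalAngle_nonneg U W) (norm_nonneg x)) two_ne_zero]
  calc ‖douglasRachford U W x‖ ^ 2 = ‖U.starProjection (W.starProjection x)‖ ^ 2 +
        ‖Uᗮ.starProjection (Wᗮ.starProjection x)‖ ^ 2 := by
        rw [douglasRachford_apply, sq, sq, sq, norm_add_sq_eq_norm_sq_add_norm_sq_real horth]
    _ ≤ c ^ 2 * ‖W.starProjection x‖ ^ 2 + c ^ 2 * ‖Wᗮ.starProjection x‖ ^ 2 := add_le_add h₁ h₂
    _ = (c * ‖x‖) ^ 2 := by rw [mul_pow, norm_sq_eq_add_norm_sq_starProjection x W]; ring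

theorem norm_douglasRachford (h : Uᗮ ⊓ Wᗮ = ⊥) :
    ‖douglasRachford U W‖ = cosMinPrincipalAngle U W :=
  le_antisymm
    (ContinuousLinearMap.opNorm_le_bound _ (cosMinPrincipalAngle_nonneg U W) fun _ =>
      norm_douglasRachford_apply_le (by simp [h]))
    (cosMinPrincipalAngle_le_norm_douglasRachford U W)

end FiniteDimensional

end Submodule

theorem projection_composition_principal_angle_bound_general
    {E : Type*} [NormedAddCommGroup E] [InnerProductSpace ℝ E] [FiniteDimensional ℝ E]
    (U W : Submodule ℝ E) (c : ℝ)
    (hc : c = sSup {r : ℝ | ∃ u ∈ U, ∃ w ∈ W, ‖u‖ = 1 ∧ ‖w‖ = 1 ∧ r = ⟪u, w⟫}) :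
    (∀ x ∈ (Uᗮ ⊓ Wᗮ)ᗮ,
      ‖(U.subtypeL ∘L Submodule.orthogonalProjectionOnto U)
            ((W.subtypeL ∘L Submodule.orthogonalProjectionOnto W) x) +
          (Uᗮ.subtypeL ∘L Submodule.orthogonalProjectionOnto Uᗮ)
            ((Wᗮ.subtypeL ∘L Submodule.orthogonalProjectionOnto Wᗮ) x)‖ ≤ c * ‖x‖) ∧
      (Uᗮ ⊓ Wᗮ = ⊥ →
        ‖(U.subtypeL ∘L Submodule.orthogonalProjectionOnto U) ∘L
              (W.subtypeL ∘L Submodule.orthogonalProjectionOnto W) +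
            (Uᗮ.subtypeL ∘L Submodule.orthogonalProjectionOnto Uᗮ) ∘L
              (Wᗮ.subtypeL ∘L Submodule.orthogonalProjectionOnto Wᗮ)‖ = c) := by
  subst hc
  exact ⟨fun _ => Submodule.norm_douglasRachford_apply_le, Submodule.norm_douglasRachford⟩

/-- Principal-angle bound for the linear part of the Douglas–Rachford
iteration: if `U ∩ W = {0}` and `c = sup{⟨u,w⟩ : u ∈ U, w ∈ W, ‖u‖ = ‖w‖ = 1}`
(`c = 0` if `U` or `W` is trivial, matching `sSup ∅ = 0` in `ℝ`), then
`‖P_U P_W x + P_{U⊥} P_{W⊥} x‖ ≤ c‖x‖` for every `x ⊥ (U^⊥ ∩ W^⊥)`, and the operator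
norm of `P_U P_W + P_{U⊥} P_{W⊥}` equals `c` when moreover `U^⊥ ∩ W^⊥ = {0}`. -/
theorem projection_composition_principal_angle_bound
    {E : Type*} [NormedAddCommGroup E] [InnerProductSpace ℝ E] [FiniteDimensional ℝ E]
    (U W : Submodule ℝ E) (hUW : U ⊓ W = ⊥) (c : ℝ)
    (hc : c = sSup {r : ℝ | ∃ u ∈ U, ∃ w ∈ W, ‖u‖ = 1 ∧ ‖w‖ = 1 ∧ r = ⟪u, w⟫}) :
    (∀ x ∈ (Uᗮ ⊓ Wᗮ)ᗮ,
      ‖(U.subtypeL ∘L Submodule.orthogonalProjectionOnto U)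
            ((W.subtypeL ∘L Submodule.orthogonalProjectionOnto W) x) +
          (Uᗮ.subtypeL ∘L Submodule.orthogonalProjectionOnto Uᗮ)
            ((Wᗮ.subtypeL ∘L Submodule.orthogonalProjectionOnto Wᗮ) x)‖ ≤ c * ‖x‖) ∧
      (Uᗮ ⊓ Wᗮ = ⊥ →
        ‖(U.subtypeL ∘L Submodule.orthogonalProjectionOnto U) ∘L
              (W.subtypeL ∘L Submodule.orthogonalProjectionOnto W) +
            (Uᗮ.subtypeL ∘L Submodule.orthogonalProjectionOnto Uᗮ) ∘L
              (Wᗮ.subtypeL ∘L Submodule.orthogonalProjectionOnto Wᗮ)‖ = c) :=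
  projection_composition_principal_angle_bound_general U W c hc
end
end

section
/- Let E be a finite-dimensional real inner product space and let U, W be subspaces of E with U ∩ W = {0}. Let P_U, P_W, P_{U⊥}, P_{W⊥} denote the orthogonal projections onto U, W, U^⊥, W^⊥, and set c = sup{⟨u, w⟩ : u ∈ U, w ∈ W, ‖u‖ = ‖w‖ = 1} (with c = 0 if U or W is the zero subspace). Then for every λ ∈ (0, 2) and every x ∈ E orthogonal to U^⊥ ∩ W^⊥, ‖(1−λ) x + λ (P_U(P_W x) + P_{U⊥}(P_{W⊥} x))‖ ≤ √(λ(2−λ)c² + (1−λ)²) · ‖x‖. Moreover c ≤ √(λ(2−λ)c² + (1−λ)²), and if c < 1 then √(λ(2−λ)c² + (1−λ)²) < 1. -/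
/-!
Write `H = P_U P_W + P_{U⊥} P_{W⊥}`. For every `x` one has `⟪x, H x⟫ = ‖H x‖²`, hence
`‖(1 - λ) x + λ H x‖² = (1 - λ)² ‖x‖² + λ (2 - λ) ‖H x‖²`, and it suffices to show
`‖H x‖ ≤ c ‖x‖` on `(U⊥ ⊓ W⊥)⊥ = U ⊔ W`. Split `x = a + b` with `a ∈ W`, `b ∈ W⊥`; the two
summands of `H x` are orthogonal, and `‖P_U a‖ ≤ c ‖a‖` because `‖P_U a‖² = ⟪P_U a, a⟫`. Writing
`b = u + w` with `u ∈ U`, `w ∈ W`, orthogonality of `b` and `w` gives `‖w‖ ≤ c ‖u‖`, and the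
distance from `b` to `U` is at most its distance to the line `ℝ u`, namely
`‖b‖ ‖w‖ / ‖u‖ ≤ c ‖b‖`.
-/

open scoped RealInnerProductSpace

noncomputable section

open Submodule

section Relaxation

variable {E : Type*} [NormedAddCommGroup E] [InnerProductSpace ℝ E]

theorem norm_sq_relaxation_of_inner_eq_norm_sq {x y : E} (h : ⟪x, y⟫ = ‖y‖ ^ 2) (t : ℝ) :
    ‖(1 - t) • x + t • y‖ ^ 2 = (1 - t) ^ 2 * ‖x‖ ^ 2 + t * (2 - t) * ‖y‖ ^ 2 := by
  rw [norm_add_sq_real, norm_smul, norm_smul, real_inner_smul_left, real_inner_smul_right, h,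
    mul_pow, mul_pow, Real.norm_eq_abs, Real.norm_eq_abs, sq_abs, sq_abs]
  ring

theorem norm_relaxation_le {x y : E} {c t : ℝ} (h : ⟪x, y⟫ = ‖y‖ ^ 2)
    (hy : ‖y‖ ^ 2 ≤ c ^ 2 * ‖x‖ ^ 2) (ht₀ : 0 ≤ t) (ht₂ : t ≤ 2) :
    ‖(1 - t) • x + t • y‖ ≤ √(t * (2 - t) * c ^ 2 + (1 - t) ^ 2) * ‖x‖ := by
  rw [← Real.sqrt_sq (norm_nonneg x), ← Real.sqrt_mul' _ (sq_nonneg _)]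
  apply Real.le_sqrt_of_sq_le
  rw [norm_sq_relaxation_of_inner_eq_norm_sq h]
  nlinarith [mul_le_mul_of_nonneg_left hy (mul_nonneg ht₀ (sub_nonneg.2 ht₂))]

end Relaxation

-- `t (2 - t) c² + (1 - t)² = c² + (1 - t)² (1 - c²) = 1 - t (2 - t) (1 - c²)`
theorem le_sqrt_relaxation_factor {c : ℝ} (hc : c ^ 2 ≤ 1) (t : ℝ) :
    c ≤ √(t * (2 - t) * c ^ 2 + (1 - t) ^ 2) :=
  Real.le_sqrt_of_sq_le (by nlinarith [mul_nonneg (sq_nonneg (1 - t)) (sub_nonneg.2 hc)])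

theorem sqrt_relaxation_factor_lt_one {c t : ℝ} (hc : c ^ 2 < 1) (ht₀ : 0 < t) (ht₂ : t < 2) :
    √(t * (2 - t) * c ^ 2 + (1 - t) ^ 2) < 1 := by
  rw [Real.sqrt_lt' one_pos]
  nlinarith [mul_pos (mul_pos ht₀ (sub_pos.2 ht₂)) (sub_pos.2 hc)]

theorem sq_le_sq_mul_sq_of_sq_le_mul {p n c : ℝ} (hp : 0 ≤ p) (h : p ^ 2 ≤ c * (p * n)) :
    p ^ 2 ≤ c ^ 2 * n ^ 2 := by
  rcases hp.eq_or_lt with rfl | hp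
  · rw [zero_pow two_ne_zero]
    positivity
  · rw [← mul_pow]
    exact pow_le_pow_left₀ hp.le (le_of_mul_le_mul_left (by nlinarith) hp) 2

section CosMinAngle

variable {E : Type*} [NormedAddCommGroup E] [InnerProductSpace ℝ E] (U W : Submodule ℝ E)

-- The cosine of the smallest principal angle; `sSup ∅ = 0` makes it `0` when `U` or `W` is `⊥`.
def cosMinAngle : ℝ :=
  sSup {r : ℝ | ∃ u ∈ U, ∃ w ∈ W, ‖u‖ = 1 ∧ ‖w‖ = 1 ∧ r = ⟪u, w⟫}

theorem one_mem_upperBounds_inner_unit :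
    1 ∈ upperBounds {r : ℝ | ∃ u ∈ U, ∃ w ∈ W, ‖u‖ = 1 ∧ ‖w‖ = 1 ∧ r = ⟪u, w⟫} := by
  rintro _ ⟨u, -, w, -, hu, hw, rfl⟩
  simpa [hu, hw] using real_inner_le_norm u w

theorem cosMinAngle_le_one : cosMinAngle U W ≤ 1 :=
  Real.sSup_le (one_mem_upperBounds_inner_unit U W) zero_le_one

theorem cosMinAngle_nonneg : 0 ≤ cosMinAngle U W := by
  obtain h | ⟨_, u, hu, w, hw, hu1, hw1, rfl⟩ :=
    {r : ℝ | ∃ u ∈ U, ∃ w ∈ W, ‖u‖ = 1 ∧ ‖w‖ = 1 ∧ r = ⟪u, w⟫}.eq_empty_or_nonempty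
  · rw [cosMinAngle, h, Real.sSup_empty]
  · refine Real.sSup_nonneg' ⟨|⟪u, w⟫|, ?_, abs_nonneg _⟩
    rcases abs_choice ⟪u, w⟫ with h | h
    · exact ⟨u, hu, w, hw, hu1, hw1, h⟩
    · exact ⟨-u, neg_mem hu, w, hw, by rwa [norm_neg], hw1, by rw [h, inner_neg_left]⟩

variable {U W} in
theorem inner_le_cosMinAngle_mul {u w : E} (hu : u ∈ U) (hw : w ∈ W) :
    ⟪u, w⟫ ≤ cosMinAngle U W * (‖u‖ * ‖w‖) := by
  rcases eq_or_ne u 0 with rfl | hu0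
  · simp
  rcases eq_or_ne w 0 with rfl | hw0
  · simp
  have hr : ⟪‖u‖⁻¹ • u, ‖w‖⁻¹ • w⟫ ≤ cosMinAngle U W :=
    le_csSup ⟨1, one_mem_upperBounds_inner_unit U W⟩
      ⟨_, U.smul_mem _ hu, _, W.smul_mem _ hw, norm_smul_inv_norm hu0, norm_smul_inv_norm hw0, rfl⟩
  rw [real_inner_smul_left, real_inner_smul_right, ← mul_assoc, ← mul_inv,
    inv_mul_le_iff₀ (by positivity)] at hr
  linarith

end CosMinAngle

section Projections

variable {E : Type*} [NormedAddCommGroup E] [InnerProductSpace ℝ E]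

theorem Submodule.norm_sq_mul_norm_starProjection_orthogonal_sq_le (K : Submodule ℝ E)
    [K.HasOrthogonalProjection] (y : E) {u : E} (hu : u ∈ K) :
    ‖u‖ ^ 2 * ‖Kᗮ.starProjection y‖ ^ 2 ≤ ‖u‖ ^ 2 * ‖y‖ ^ 2 - ⟪y, u⟫ ^ 2 := by
  have hinner : ⟪y, u⟫ = ⟪K.starProjection y, u⟫ := by
    rw [inner_starProjection_left_eq_right, starProjection_eq_self_iff.2 hu]
  have hcs : ⟪y, u⟫ ^ 2 ≤ ‖K.starProjection y‖ ^ 2 * ‖u‖ ^ 2 := by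
    rw [hinner, ← mul_pow, ← sq_abs]
    exact pow_le_pow_left₀ (abs_nonneg _) (abs_real_inner_le_norm _ _) 2
  rw [K.norm_sq_eq_add_norm_sq_starProjection y]
  nlinarith

variable {U W : Submodule ℝ E} {c : ℝ}

theorem norm_starProjection_sq_le_of_mem [U.HasOrthogonalProjection]
    (hle : ∀ u ∈ U, ∀ w ∈ W, ⟪u, w⟫ ≤ c * (‖u‖ * ‖w‖)) {a : E} (ha : a ∈ W) :
    ‖U.starProjection a‖ ^ 2 ≤ c ^ 2 * ‖a‖ ^ 2 := by
  refine sq_le_sq_mul_sq_of_sq_le_mul (norm_nonneg _) ?_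
  have hsq : ⟪U.starProjection a, a⟫ = ‖U.starProjection a‖ ^ 2 := by
    simpa using U.re_inner_starProjection_eq_normSq a
  exact hsq ▸ hle _ (U.starProjection_apply_mem a) a ha

theorem norm_starProjection_orthogonal_sq_le [U.HasOrthogonalProjection]
    (hle : ∀ u ∈ U, ∀ w ∈ W, ⟪u, w⟫ ≤ c * (‖u‖ * ‖w‖)) {b : E} (hbW : b ∈ Wᗮ)
    (hb : b ∈ U ⊔ W) :
    ‖Uᗮ.starProjection b‖ ^ 2 ≤ c ^ 2 * ‖b‖ ^ 2 := by
  obtain ⟨u, hu, w, hw, rfl⟩ := mem_sup.1 hb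
  have huw : ⟪u, w⟫ = -‖w‖ ^ 2 := by
    have hbw : ⟪u + w, w⟫ = 0 := inner_left_of_mem_orthogonal hw hbW
    rw [inner_add_left, real_inner_self_eq_norm_sq] at hbw
    linarith
  have hu_sq : ‖u‖ ^ 2 = ‖u + w‖ ^ 2 + ‖w‖ ^ 2 := by
    rw [norm_add_sq_real, huw]
    ring
  have hbu : ⟪u + w, u⟫ = ‖u + w‖ ^ 2 := by
    rw [inner_add_left, real_inner_self_eq_norm_sq, real_inner_comm, huw]
    linarith
  have hw_le : ‖w‖ ^ 2 ≤ c ^ 2 * ‖u‖ ^ 2 := by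
    refine sq_le_sq_mul_sq_of_sq_le_mul (norm_nonneg w) ?_
    simpa [huw, mul_comm ‖w‖] using hle (-u) (neg_mem hu) w hw
  have hdist := U.norm_sq_mul_norm_starProjection_orthogonal_sq_le (u + w) hu
  rw [hbu] at hdist
  rcases (sq_nonneg ‖u‖).eq_or_lt with hu0 | hu0
  · have := Uᗮ.norm_starProjection_apply_le (u + w)
    nlinarith [sq_nonneg ‖w‖, norm_nonneg (Uᗮ.starProjection (u + w))]
  · exact le_of_mul_le_mul_left (by nlinarith) hu0

end Projections

section ProjCompSum

variable {E : Type*} [NormedAddCommGroup E] [InnerProductSpace ℝ E]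
  (U W : Submodule ℝ E) [U.HasOrthogonalProjection] [W.HasOrthogonalProjection]

-- The operator `H̃` of the paper.
def projCompSum : E →L[ℝ] E :=
  U.starProjection ∘L W.starProjection + Uᗮ.starProjection ∘L Wᗮ.starProjection

theorem projCompSum_apply (x : E) :
    projCompSum U W x = U.starProjection (W.starProjection x) +
      Uᗮ.starProjection (Wᗮ.starProjection x) :=
  rfl

theorem norm_sq_projCompSum (x : E) :
    ‖projCompSum U W x‖ ^ 2 =
      ‖U.starProjection (W.starProjection x)‖ ^ 2 +
        ‖Uᗮ.starProjection (Wᗮ.starProjection x)‖ ^ 2 := by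
  rw [projCompSum_apply, norm_add_sq_real,
    inner_right_of_mem_orthogonal (U.starProjection_apply_mem _) (Uᗮ.starProjection_apply_mem _)]
  ring

theorem inner_projCompSum_self (x : E) : ⟪x, projCompSum U W x⟫ = ‖projCompSum U W x‖ ^ 2 := by
  rw [norm_sq_projCompSum, projCompSum_apply]
  set a := W.starProjection x
  set b := Wᗮ.starProjection x
  have hx : x = a + b := (W.starProjection_add_starProjection_orthogonal x).symm
  have hab : ⟪a, b⟫ = 0 :=
    inner_right_of_mem_orthogonal (W.starProjection_apply_mem x) (Wᗮ.starProjection_apply_mem x)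
  have hcross : ⟪b, U.starProjection a⟫ + ⟪a, Uᗮ.starProjection b⟫ = 0 := by
    rw [← inner_starProjection_left_eq_right U b a, ← real_inner_comm a, ← inner_add_left,
      U.starProjection_add_starProjection_orthogonal, real_inner_comm, hab]
  have ha : ⟪a, U.starProjection a⟫ = ‖U.starProjection a‖ ^ 2 := by
    simpa [real_inner_comm] using U.re_inner_starProjection_eq_normSq a
  have hb : ⟪b, Uᗮ.starProjection b⟫ = ‖Uᗮ.starProjection b‖ ^ 2 := by
    simpa [real_inner_comm] using Uᗮ.re_inner_starProjection_eq_normSq b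
  rw [hx, inner_add_left, inner_add_right, inner_add_right]
  linarith

variable {U W} in
theorem norm_projCompSum_sq_le {c : ℝ} (hle : ∀ u ∈ U, ∀ w ∈ W, ⟪u, w⟫ ≤ c * (‖u‖ * ‖w‖))
    {x : E} (hx : x ∈ U ⊔ W) :
    ‖projCompSum U W x‖ ^ 2 ≤ c ^ 2 * ‖x‖ ^ 2 := by
  have hb : Wᗮ.starProjection x ∈ U ⊔ W := by
    rw [starProjection_orthogonal_val]
    exact sub_mem hx (mem_sup_right (W.starProjection_apply_mem x))
  rw [norm_sq_projCompSum, W.norm_sq_eq_add_norm_sq_starProjection x, mul_add]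
  exact add_le_add (norm_starProjection_sq_le_of_mem hle (W.starProjection_apply_mem x))
    (norm_starProjection_orthogonal_sq_le hle (Wᗮ.starProjection_apply_mem x) hb)

end ProjCompSum

theorem relaxed_projection_composition_norm_bound_general
    {E : Type*} [NormedAddCommGroup E] [InnerProductSpace ℝ E] [FiniteDimensional ℝ E]
    (U W : Submodule ℝ E) (c : ℝ)
    (hc : c = sSup {r : ℝ | ∃ u ∈ U, ∃ w ∈ W, ‖u‖ = 1 ∧ ‖w‖ = 1 ∧ r = ⟪u, w⟫}) :
    (∀ lam : ℝ, 0 < lam → lam < 2 → ∀ x ∈ (Uᗮ ⊓ Wᗮ)ᗮ,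
      ‖(1 - lam) • x +
          lam • ((U.subtypeL ∘L Submodule.orthogonalProjectionOnto U)
              ((W.subtypeL ∘L Submodule.orthogonalProjectionOnto W) x) +
            (Uᗮ.subtypeL ∘L Submodule.orthogonalProjectionOnto Uᗮ)
              ((Wᗮ.subtypeL ∘L Submodule.orthogonalProjectionOnto Wᗮ) x))‖ ≤
        Real.sqrt (lam * (2 - lam) * c ^ 2 + (1 - lam) ^ 2) * ‖x‖) ∧
      (∀ lam : ℝ, 0 < lam → lam < 2 →
        c ≤ Real.sqrt (lam * (2 - lam) * c ^ 2 + (1 - lam) ^ 2)) ∧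
      (∀ lam : ℝ, 0 < lam → lam < 2 → c < 1 →
        Real.sqrt (lam * (2 - lam) * c ^ 2 + (1 - lam) ^ 2) < 1) := by
  obtain rfl : c = cosMinAngle U W := hc
  have hc₀ := cosMinAngle_nonneg U W
  refine ⟨fun lam hl₀ hl₂ x hx => ?_,
    fun lam _ _ => le_sqrt_relaxation_factor (pow_le_one₀ hc₀ (cosMinAngle_le_one U W)) lam,
    fun lam hl₀ hl₂ hc₁ => sqrt_relaxation_factor_lt_one (pow_lt_one₀ hc₀ hc₁ two_ne_zero) hl₀ hl₂⟩
  rw [inf_orthogonal, orthogonal_orthogonal] at hx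
  exact norm_relaxation_le (inner_projCompSum_self U W x)
    (norm_projCompSum_sq_le (fun _ hu _ hw => inner_le_cosMinAngle_mul hu hw) hx) hl₀.le hl₂.le

/-- Norm estimate for the relaxed operator `H̃^λ = (1−λ)I + λH̃`:
if `U ∩ W = {0}` and `c = sup{⟨u,w⟩ : u ∈ U, w ∈ W, ‖u‖ = ‖w‖ = 1}` (`c = 0` if `U` or
`W` is trivial, matching `sSup ∅ = 0` in `ℝ`), then for `λ ∈ (0,2)` and every
`x ⊥ (U^⊥ ∩ W^⊥)`, `‖(1−λ)x + λ(P_U P_W x + P_{U⊥} P_{W⊥} x)‖ ≤ √(λ(2−λ)c² + (1−λ)²)‖x‖`;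
moreover `c ≤ √(λ(2−λ)c² + (1−λ)²)`, and the latter is `< 1` whenever `c < 1`. -/
theorem relaxed_projection_composition_norm_bound
    {E : Type*} [NormedAddCommGroup E] [InnerProductSpace ℝ E] [FiniteDimensional ℝ E]
    (U W : Submodule ℝ E) (hUW : U ⊓ W = ⊥) (c : ℝ)
    (hc : c = sSup {r : ℝ | ∃ u ∈ U, ∃ w ∈ W, ‖u‖ = 1 ∧ ‖w‖ = 1 ∧ r = ⟪u, w⟫}) :
    (∀ lam : ℝ, 0 < lam → lam < 2 → ∀ x ∈ (Uᗮ ⊓ Wᗮ)ᗮ,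
      ‖(1 - lam) • x +
          lam • ((U.subtypeL ∘L Submodule.orthogonalProjectionOnto U)
              ((W.subtypeL ∘L Submodule.orthogonalProjectionOnto W) x) +
            (Uᗮ.subtypeL ∘L Submodule.orthogonalProjectionOnto Uᗮ)
              ((Wᗮ.subtypeL ∘L Submodule.orthogonalProjectionOnto Wᗮ) x))‖ ≤
        Real.sqrt (lam * (2 - lam) * c ^ 2 + (1 - lam) ^ 2) * ‖x‖) ∧
      (∀ lam : ℝ, 0 < lam → lam < 2 →
        c ≤ Real.sqrt (lam * (2 - lam) * c ^ 2 + (1 - lam) ^ 2)) ∧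
      (∀ lam : ℝ, 0 < lam → lam < 2 → c < 1 →
        Real.sqrt (lam * (2 - lam) * c ^ 2 + (1 - lam) ^ 2) < 1) :=
  relaxed_projection_composition_norm_bound_general U W c hc
end
end

section
/- Fix τ > 0 and v_* ∈ V with support S = {j : (v_*)_j ≠ 0}. Suppose q_* ∈ V is a fixed point of H_τ lying in the interior of Q (i.e., ‖(q_*)_j‖ < τ for every j ∉ S and ‖(q_*)_j‖ > τ for every j ∈ S). If a sequence (q_k) in V satisfies q_{k+1} = H_τ(q_k) for all k and q_k → q_*, then there exists K ∈ ℕ such that for all k ≥ K, the orthogonal projection of q_k − q_* onto U^⊥ ∩ W^⊥ is zero, where U^⊥ is the orthogonal complement of U = K(ker A) and W^⊥ = {z ∈ V : z_j = 0 for all j ∈ S}. -/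
open scoped RealInnerProductSpace
open scoped Classical

noncomputable section

/-!
Near the interior fixed point `q_*`, every block outside the support `S` of `v_*` has norm at
most `τ`, so the shrinkage vanishes there. Hence each increment `q_{k+1} - q_k` is a difference of
two points of `V_b` (lying in `U`) minus a vector supported on `S` (lying in `W`), and is
orthogonal to `U^⊥ ∩ W^⊥`. The projection of `q_k - q_*` onto `U^⊥ ∩ W^⊥` is therefore
eventually constant, and since it tends to `0` it is eventually `0`.
-/

def douglasRachford {N d : ℕ} (P : Vsp N d → Vsp N d) (τ : ℝ) (q : Vsp N d) : Vsp N d :=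
  P ((2 : ℝ) • shrink τ q - q) + q - shrink τ q

theorem shrink_apply_of_norm_le {N d : ℕ} {τ : ℝ} {q : Vsp N d} {j : Fin N} (h : ‖q j‖ ≤ τ) :
    shrink τ q j = 0 := by
  simp [shrink, h]

theorem mem_orthogonal_vanishingOn {N d : ℕ} {s : Set (Fin N)} {z : Vsp N d}
    (hz : ∀ j ∉ s, z j = 0) : z ∈ (vanishingOn (d := d) s)ᗮ := by
  rw [Submodule.mem_orthogonal']
  intro e he
  rw [PiLp.inner_apply]
  refine Finset.sum_eq_zero fun j _ => ?_
  by_cases hj : j ∈ s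
  · simp [he j hj]
  · simp [hz j hj]

theorem shrink_sub_shrink_mem_orthogonal_vanishingOn {N d : ℕ} {s : Set (Fin N)} {τ : ℝ}
    {q q' : Vsp N d} (hq : ∀ j ∉ s, ‖q j‖ ≤ τ) (hq' : ∀ j ∉ s, ‖q' j‖ ≤ τ) :
    shrink τ q - shrink τ q' ∈ (vanishingOn (d := d) s)ᗮ :=
  mem_orthogonal_vanishingOn fun j hj => by
    simp [shrink_apply_of_norm_le (hq j hj), shrink_apply_of_norm_le (hq' j hj)]

theorem sub_mem_map_ker {X Z V : Type*} [AddCommGroup X] [Module ℝ X] [AddCommGroup Z]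
    [Module ℝ Z] [AddCommGroup V] [Module ℝ V] (K : X →ₗ[ℝ] V) (A : X →ₗ[ℝ] Z) {b : Z}
    {u u' : X} (hu : A u = b) (hu' : A u' = b) : K u - K u' ∈ (LinearMap.ker A).map K :=
  ⟨u - u', by simp [hu, hu'], map_sub K u u'⟩

theorem douglasRachford_sub_sub_mem_orthogonal {N d : ℕ} {X Z : Type*} [AddCommGroup X]
    [Module ℝ X] [AddCommGroup Z] [Module ℝ Z] (K : X →ₗ[ℝ] Vsp N d) (A : X →ₗ[ℝ] Z) {b : Z}
    {P : Vsp N d → Vsp N d} (hP : ∀ q, ∃ u, A u = b ∧ K u = P q) {s : Set (Fin N)} {τ : ℝ}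
    {q q' : Vsp N d} (hq : ∀ j ∉ s, ‖q j‖ ≤ τ) (hq' : ∀ j ∉ s, ‖q' j‖ ≤ τ) :
    douglasRachford P τ q - douglasRachford P τ q' - (q - q') ∈
      (((LinearMap.ker A).map K)ᗮ ⊓ vanishingOn (d := d) s)ᗮ := by
  obtain ⟨u, hu, hKu⟩ := hP ((2 : ℝ) • shrink τ q - q)
  obtain ⟨u', hu', hKu'⟩ := hP ((2 : ℝ) • shrink τ q' - q')
  have hsplit : douglasRachford P τ q - douglasRachford P τ q' - (q - q') =
      (K u - K u') - (shrink τ q - shrink τ q') := by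
    rw [douglasRachford, douglasRachford, hKu, hKu']
    abel
  rw [hsplit]
  refine Submodule.sub_mem _ ?_ ?_
  · exact Submodule.orthogonal_le inf_le_left
      (Submodule.le_orthogonal_orthogonal _ (sub_mem_map_ker K A hu hu'))
  · exact Submodule.orthogonal_le inf_le_right
      (shrink_sub_shrink_mem_orthogonal_vanishingOn hq hq')

theorem eventually_forall_norm_apply_le {N d : ℕ} {s : Set (Fin N)} {τ : ℝ} {q : ℕ → Vsp N d}
    {x : Vsp N d} (hq : Filter.Tendsto q Filter.atTop (nhds x)) (hx : ∀ j ∉ s, ‖x j‖ < τ) :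
    ∀ᶠ k in Filter.atTop, ∀ j ∉ s, ‖q k j‖ ≤ τ := by
  rw [Filter.eventually_all]
  intro j
  by_cases hj : j ∈ s
  · exact Filter.Eventually.of_forall fun _ h => absurd hj h
  · have hnorm : Filter.Tendsto (fun k => ‖q k j‖) Filter.atTop (nhds ‖x j‖) :=
      ((PiLp.continuous_apply 2 _ j).tendsto x |>.comp hq).norm
    filter_upwards [hnorm.eventually (eventually_le_nhds (hx j hj))] with k hk
    exact fun _ => hk

theorem orthogonalProjectionOnto_eq_zero_of_tendsto_zero {F : Type*} [NormedAddCommGroup F]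
    [InnerProductSpace ℝ F] (E : Submodule ℝ F) [E.HasOrthogonalProjection] {x : ℕ → F}
    (hx : Filter.Tendsto x Filter.atTop (nhds 0)) {K₀ : ℕ}
    (hstep : ∀ k, K₀ ≤ k → x (k + 1) - x k ∈ Eᗮ) :
    ∀ k, K₀ ≤ k → E.orthogonalProjectionOnto (x k) = 0 := by
  have hconst : ∀ k, K₀ ≤ k →
      E.orthogonalProjectionOnto (x k) = E.orthogonalProjectionOnto (x K₀) := by
    intro k hk
    induction k, hk using Nat.le_induction with
    | base => rfl
    | succ n hn ih =>
      rw [← ih, ← sub_eq_zero, ← map_sub]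
      exact Submodule.orthogonalProjectionOnto_apply_of_mem_orthogonal (hstep n hn)
  have hproj : Filter.Tendsto (fun k => E.orthogonalProjectionOnto (x k)) Filter.atTop
      (nhds (E.orthogonalProjectionOnto (x K₀))) :=
    tendsto_atTop_of_eventually_const hconst
  have hzero : E.orthogonalProjectionOnto (x K₀) = 0 := by
    simpa using
      tendsto_nhds_unique hproj ((E.orthogonalProjectionOnto.continuous.tendsto 0).comp hx)
  exact fun k hk => (hconst k hk).trans hzero

theorem tv_cs_drs_eventual_projection_zero_general
    {N d : ℕ}
    {X Z : Type*} [NormedAddCommGroup X] [InnerProductSpace ℝ X]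
    [NormedAddCommGroup Z] [InnerProductSpace ℝ Z]
    (K : X →ₗ[ℝ] Vsp N d) (A : X →ₗ[ℝ] Z) (b : Z)
    -- `P` is the metric projection onto the affine set `V_b = {K u : A u = b}`
    (P : Vsp N d → Vsp N d)
    (hP : ∀ q : Vsp N d, (∃ u, A u = b ∧ K u = P q) ∧
      ∀ v, (∃ u, A u = b ∧ K u = v) → ‖q - P q‖ ≤ ‖q - v‖)
    (τ : ℝ)
    (vstar : Vsp N d)
    (qstar : Vsp N d)
    -- `q_*` is a fixed point of `H_τ`
    (hfix : P ((2 : ℝ) • shrink τ qstar - qstar) + qstar - shrink τ qstar = qstar)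
    -- `q_*` lies in the interior of `Q`
    (hint : ∀ j, (vstar j = 0 → ‖qstar j‖ < τ) ∧ (vstar j ≠ 0 → τ < ‖qstar j‖))
    (q : ℕ → Vsp N d)
    -- `q_{k+1} = H_τ(q_k)`
    (hrec : ∀ k, q (k + 1) =
      P ((2 : ℝ) • shrink τ (q k) - q k) + q k - shrink τ (q k))
    (hlim : Filter.Tendsto q Filter.atTop (nhds qstar)) :
    ∃ K₀ : ℕ, ∀ k, K₀ ≤ k →
      Submodule.orthogonalProjection
        (((LinearMap.ker A).map K)ᗮ ⊓ vanishingOn (d := d) {j | vstar j ≠ 0})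
        (q k - qstar) = 0 := by
  have hstar : ∀ j ∉ {j | vstar j ≠ 0}, ‖qstar j‖ < τ := fun j hj => (hint j).1 (not_not.1 hj)
  obtain ⟨K₀, hK₀⟩ := Filter.eventually_atTop.1 (eventually_forall_norm_apply_le hlim hstar)
  have hdiff : Filter.Tendsto (fun k => q k - qstar) Filter.atTop (nhds 0) := by
    simpa using hlim.sub_const qstar
  refine ⟨K₀, orthogonalProjectionOnto_eq_zero_of_tendsto_zero _ hdiff fun k hk => ?_⟩
  have hstep := douglasRachford_sub_sub_mem_orthogonal K A (fun q => (hP q).1)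
    (hK₀ k hk) fun j hj => (hstar j hj).le
  rwa [show douglasRachford P τ qstar = qstar from hfix,
    show douglasRachford P τ (q k) = q (k + 1) from (hrec k).symm] at hstep

/-- Lemma 4.7 of the paper: if the Douglas–Rachford iterates converge to
an interior fixed point `q_*`, then eventually the orthogonal projection of `q_k − q_*`
onto `U^⊥ ∩ W^⊥` vanishes, where `U = K(ker A)` and
`W^⊥ = {z : z_j = 0 for all j ∈ S}`. -/
theorem tv_cs_drs_eventual_projection_zero
    {N d : ℕ} (hN : 0 < N) (hd : 0 < d)
    {X Z : Type*} [NormedAddCommGroup X] [InnerProductSpace ℝ X] [FiniteDimensional ℝ X]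
    [NormedAddCommGroup Z] [InnerProductSpace ℝ Z] [FiniteDimensional ℝ Z]
    (K : X →ₗ[ℝ] Vsp N d) (A : X →ₗ[ℝ] Z) (b : Z) (hb : ∃ u, A u = b)
    -- `P` is the metric projection onto the affine set `V_b = {K u : A u = b}`
    (P : Vsp N d → Vsp N d)
    (hP : ∀ q : Vsp N d, (∃ u, A u = b ∧ K u = P q) ∧
      ∀ v, (∃ u, A u = b ∧ K u = v) → ‖q - P q‖ ≤ ‖q - v‖)
    (τ : ℝ) (hτ : 0 < τ)
    (vstar : Vsp N d)
    (qstar : Vsp N d)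
    -- `q_*` is a fixed point of `H_τ`
    (hfix : P ((2 : ℝ) • shrink τ qstar - qstar) + qstar - shrink τ qstar = qstar)
    -- `q_*` lies in the interior of `Q`
    (hint : ∀ j, (vstar j = 0 → ‖qstar j‖ < τ) ∧ (vstar j ≠ 0 → τ < ‖qstar j‖))
    (q : ℕ → Vsp N d)
    -- `q_{k+1} = H_τ(q_k)`
    (hrec : ∀ k, q (k + 1) =
      P ((2 : ℝ) • shrink τ (q k) - q k) + q k - shrink τ (q k))
    (hlim : Filter.Tendsto q Filter.atTop (nhds qstar)) :
    ∃ K₀ : ℕ, ∀ k, K₀ ≤ k →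
      Submodule.orthogonalProjection
        (((LinearMap.ker A).map K)ᗮ ⊓ vanishingOn (d := d) {j | vstar j ≠ 0})
        (q k - qstar) = 0 :=
  tv_cs_drs_eventual_projection_zero_general K A b P hP τ vstar qstar hfix hint q hrec hlim
end
end

section
/- Let E and F be finite-dimensional real inner product spaces, K : F → E a linear map, h : F → ℝ a convex function, β > 0, and q ∈ E. Define the convex conjugate h* : F → ℝ ∪ {+∞} by h*(w) = sup_{p ∈ F} (⟨w, p⟩ − h(p)). Suppose p̂ ∈ F minimizes p ↦ h(p) + (β/2)‖Kp − q‖² over F. Then ŷ := β(Kp̂ − q) minimizes y ↦ h*(−K*y) + (1/(2β))‖y + βq‖² over E; that is, h*(−K*ŷ) is finite and for every y ∈ E, h*(−K*ŷ) + (1/(2β))‖ŷ + βq‖² ≤ h*(−K*y) + (1/(2β))‖y + βq‖² (inequality in ℝ ∪ {+∞}). -/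
/-!
Minimality of `p̂` together with convexity of `h` gives the first-order condition
`h p̂ - h p ≤ β ⟪K p̂ - q, K (p - p̂)⟫`, i.e. `-K* ŷ` is a subgradient of `h` at `p̂`. Hence the
supremum defining `h* (-K* ŷ)` is attained at `p̂`, while for any other `y` the point `p̂` only
gives the Fenchel–Young lower bound for `h* (-K* y)`. What remains is the quadratic
`y ↦ ‖y + β q‖² / (2β) - ⟪y, K p̂⟫`, whose minimizer is exactly `ŷ = β (K p̂ - q)`.
-/

open scoped RealInnerProductSpace
open Set

theorem ConvexOn.sub_le_of_isMinOn_add {E : Type*} [AddCommGroup E] [Module ℝ E] {s : Set E}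
    {f g : E → ℝ} {x y : E} {g' : ℝ} (hf : ConvexOn ℝ s f) (hx : x ∈ s) (hy : y ∈ s)
    (hmin : IsMinOn (f + g) s x) (hg : HasLineDerivAt ℝ g g' x (y - x)) :
    f x - f y ≤ g' := by
  -- for `t ∈ (0, 1]`, convexity and minimality give `t (f x - f y) ≤ g (x + t (y - x)) - g x`
  refine ge_of_tendsto hg.tendsto_slope_zero_right ?_
  filter_upwards [Ioc_mem_nhdsGT zero_lt_one] with t ⟨ht0, ht1⟩
  have hseg : x + t • (y - x) = (1 - t) • x + t • y := by module
  have hmem : x + t • (y - x) ∈ s := hseg ▸ hf.1 hx hy (by linarith) ht0.le (by ring)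
  have hconv : f (x + t • (y - x)) ≤ (1 - t) * f x + t * f y := by
    simpa [hseg, smul_eq_mul] using hf.2 hx hy (by linarith) ht0.le (by ring)
  have hle := isMinOn_iff.mp hmin _ hmem
  simp only [Pi.add_apply] at hle
  rw [smul_eq_mul, le_inv_mul_iff₀ ht0]
  linarith

theorem hasLineDerivAt_norm_sub_sq {E F : Type*} [NormedAddCommGroup E] [InnerProductSpace ℝ E]
    [AddCommGroup F] [Module ℝ F] (A : F →ₗ[ℝ] E) (q : E) (x v : F) :
    HasLineDerivAt ℝ (fun p => ‖A p - q‖ ^ 2) (2 * ⟪A x - q, A v⟫) x v := by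
  have hline (t : ℝ) : A (x + t • v) - q = (A x - q) + t • A v := by
    simp only [map_add, map_smul]; abel
  have : HasDerivAt (fun t : ℝ => (A x - q) + t • A v) (A v) 0 := by
    simpa using ((hasDerivAt_id (0:ℝ)).smul_const (A v)).const_add (A x - q)
  show HasDerivAt (fun t : ℝ => ‖A (x + t • v) - q‖ ^ 2) _ 0
  simpa only [hline, zero_smul, add_zero] using this.norm_sq

theorem isMinOn_norm_add_smul_sq_sub_inner {E : Type*} [NormedAddCommGroup E]
    [InnerProductSpace ℝ E] {β : ℝ} (hβ : 0 < β) (z q : E) :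
    IsMinOn (fun y => 1 / (2 * β) * ‖y + β • q‖ ^ 2 - ⟪y, z⟫) univ (β • (z - q)) := by
  refine isMinOn_univ_iff.2 fun y => ?_
  have hsq : 0 ≤ 1 / (2 * β) * ‖y + β • q - β • z‖ ^ 2 := by positivity
  have hz : β • (z - q) + β • q = β • z := by module
  simp only [hz, ← real_inner_self_eq_norm_sq, inner_add_left, inner_add_right, inner_sub_left,
    inner_sub_right, real_inner_smul_left, real_inner_smul_right, real_inner_comm q y,
    real_inner_comm z y, real_inner_comm q z] at hsq ⊢
  field_simp at hsq ⊢
  linarith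

section FenchelConjugate

variable {F : Type*} [NormedAddCommGroup F] [InnerProductSpace ℝ F]

noncomputable def fenchelConjugate (h : F → ℝ) (w : F) : EReal :=
  ⨆ p : F, ((⟪w, p⟫ - h p : ℝ) : EReal)

theorem inner_sub_le_fenchelConjugate (h : F → ℝ) (w x : F) :
    ((⟪w, x⟫ - h x : ℝ) : EReal) ≤ fenchelConjugate h w :=
  le_iSup (fun p : F => ((⟪w, p⟫ - h p : ℝ) : EReal)) x

theorem fenchelConjugate_eq_of_forall_le {h : F → ℝ} {w x : F}
    (hw : ∀ p, h x + ⟪w, p - x⟫ ≤ h p) :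
    fenchelConjugate h w = ((⟪w, x⟫ - h x : ℝ) : EReal) := by
  refine le_antisymm (iSup_le fun p => EReal.coe_le_coe_iff.2 ?_)
    (inner_sub_le_fenchelConjugate h w x)
  linarith [hw p, inner_sub_right (𝕜 := ℝ) w p x]

end FenchelConjugate

/-- Lemma C.1 of the paper (chain-rule/prox identity): if `p̂` minimizes
`p ↦ h(p) + (β/2)‖Kp − q‖²`, then `ŷ = β(Kp̂ − q)` minimizes
`y ↦ h*(−K*y) + ‖y + βq‖²/(2β)` (with values in `ℝ ∪ {+∞}`, modeled by `EReal`),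
and `h*(−K*ŷ)` is finite. -/
theorem prox_chain_rule_identity
    {E F : Type*} [NormedAddCommGroup E] [InnerProductSpace ℝ E] [FiniteDimensional ℝ E]
    [NormedAddCommGroup F] [InnerProductSpace ℝ F] [FiniteDimensional ℝ F]
    (K : F →ₗ[ℝ] E) (h : F → ℝ) (hconv : ConvexOn ℝ Set.univ h)
    (β : ℝ) (hβ : 0 < β) (q : E) (phat : F)
    (hmin : ∀ p : F, h phat + (β / 2) * ‖K phat - q‖ ^ 2 ≤
      h p + (β / 2) * ‖K p - q‖ ^ 2) :
    (⨆ p : F, ((⟪-(LinearMap.adjoint K (β • (K phat - q))), p⟫ - h p : ℝ) : EReal)) ≠ ⊤ ∧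
      ∀ y : E,
        (⨆ p : F, ((⟪-(LinearMap.adjoint K (β • (K phat - q))), p⟫ - h p : ℝ) : EReal)) +
            ((1 / (2 * β) * ‖β • (K phat - q) + β • q‖ ^ 2 : ℝ) : EReal) ≤
          (⨆ p : F, ((⟪-(LinearMap.adjoint K y), p⟫ - h p : ℝ) : EReal)) +
            ((1 / (2 * β) * ‖y + β • q‖ ^ 2 : ℝ) : EReal) := by
  change fenchelConjugate h _ ≠ ⊤ ∧ ∀ y, fenchelConjugate h _ + _ ≤ fenchelConjugate h _ + _
  have hsubgrad (p : F) :
      h phat + ⟪-(LinearMap.adjoint K (β • (K phat - q))), p - phat⟫ ≤ h p := by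
    have hline : HasLineDerivAt ℝ (fun p => β / 2 * ‖K p - q‖ ^ 2)
        (β / 2 * (2 * ⟪K phat - q, K (p - phat)⟫)) phat (p - phat) :=
      (hasLineDerivAt_norm_sub_sq K q phat (p - phat)).const_mul _
    have hfirst := hconv.sub_le_of_isMinOn_add (mem_univ phat) (mem_univ p)
      (isMinOn_univ_iff.2 hmin) hline
    rw [inner_neg_left, LinearMap.adjoint_inner_left, real_inner_smul_left]
    linarith
  have hconj := fenchelConjugate_eq_of_forall_le hsubgrad
  refine ⟨hconj ▸ EReal.coe_ne_top _, fun y => ?_⟩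
  have hquad := isMinOn_univ_iff.1 (isMinOn_norm_add_smul_sq_sub_inner hβ (K phat) q) y
  calc fenchelConjugate h _ + _
      ≤ ((⟪-(LinearMap.adjoint K y), phat⟫ - h phat : ℝ) : EReal) +
          ((1 / (2 * β) * ‖y + β • q‖ ^ 2 : ℝ) : EReal) := by
        rw [hconj, ← EReal.coe_add, ← EReal.coe_add, EReal.coe_le_coe_iff,
          inner_neg_left, inner_neg_left, LinearMap.adjoint_inner_left,
          LinearMap.adjoint_inner_left]
        linarith
    _ ≤ _ := add_le_add_left (inner_sub_le_fenchelConjugate h _ phat) _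
end

section
/- Let X and Y be real inner product spaces, K : X → Y a linear map, τ > 0, γ = 1/τ, and Pf, Pg : Y → Y arbitrary maps. Let (x_k) be a sequence in X and (y_k), (z_k) sequences in Y. Define u_k = x_k, v_k = z_k, and w_k = (1/τ)(K x_k + τ z_k − y_k). Then the following two systems of recursions are equivalent (each holds for all k if and only if the other does): (ADMM form) γ K x_{k+1} + (z_k − γ y_k) = Pg(z_k − γ y_k), y_{k+1} = Pf(τ z_k + K x_{k+1}), z_{k+1} = z_k − γ(y_{k+1} − K x_{k+1}); (G-prox PDHG form) K u_{k+1} − K u_k + τ w_k = τ Pg(w_k − (1/τ) K u_k), τ v_{k+1} = τ v_k + K u_{k+1} − Pf(τ v_k + K u_{k+1}), w_{k+1} = 2 v_{k+1} − v_k. -/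
/-!
Substituting `u = x`, `v = z` and `w = τ⁻¹ • (K x + τ • z - y)`, so that `w - τ⁻¹ • K u = z - γ • y`,
matches the recursions line by line: the first PDHG step is `τ` times the first ADMM step, the
extrapolation `w (k+1) = 2 v (k+1) - v k` is the ADMM dual update, and given that update the
second PDHG step says exactly `y (k+1) = Pf (τ • z k + K (x (k+1)))`.
-/

namespace AdmmGproxPdhg

variable {𝕜 Y : Type*} [Field 𝕜] [AddCommGroup Y] [Module 𝕜 Y] {τ : 𝕜}

theorem inv_smul_sub_inv_smul (hτ : τ ≠ 0) (p z y : Y) :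
    τ⁻¹ • (p + τ • z - y) - τ⁻¹ • p = z - τ⁻¹ • y := by
  rw [smul_sub, smul_add, inv_smul_smul₀ hτ]
  abel

theorem primal_step_iff (hτ : τ ≠ 0) (p p' z y q : Y) :
    p' - p + τ • τ⁻¹ • (p + τ • z - y) = τ • q ↔ τ⁻¹ • p' + (z - τ⁻¹ • y) = q := by
  have hscale : p' - p + τ • τ⁻¹ • (p + τ • z - y) = τ • (τ⁻¹ • p' + (z - τ⁻¹ • y)) := by
    rw [smul_inv_smul₀ hτ, smul_add, smul_inv_smul₀ hτ, smul_sub, smul_inv_smul₀ hτ]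
    abel
  rw [hscale, smul_right_inj hτ]

theorem extrapolation_iff_dual_step (hτ : τ ≠ 0) (p' z z' y' : Y) :
    τ⁻¹ • (p' + τ • z' - y') = (2 : 𝕜) • z' - z ↔ z' = z - τ⁻¹ • (y' - p') := by
  constructor <;> intro h <;>
    linear_combination (norm := match_scalars <;> field_simp <;> ring) -h

theorem prox_step_iff_of_dual_step (hτ : τ ≠ 0) {p' z z' y' F : Y}
    (hz : z' = z - τ⁻¹ • (y' - p')) : τ • z' = τ • z + p' - F ↔ y' = F := by
  have hscaled : τ • z' = τ • z + p' - y' := by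
    rw [hz, smul_sub, smul_inv_smul₀ hτ]
    abel
  rw [hscaled, sub_right_inj, eq_comm]

end AdmmGproxPdhg

open AdmmGproxPdhg in
/-- The purely algebraic change-of-variables equivalence between the
proximal form of ADMM (with step `γ = 1/τ`) and the proximal form of G-prox PDHG
(with step `τ`), for arbitrary maps `Pf`, `Pg` (Theorem 3.1 / Appendix C of the paper). -/
theorem admm_gprox_pdhg_recursion_equivalence
    {X Y : Type*} [NormedAddCommGroup X] [InnerProductSpace ℝ X]
    [NormedAddCommGroup Y] [InnerProductSpace ℝ Y]
    (K : X →ₗ[ℝ] Y) (τ γ : ℝ) (hτ : 0 < τ) (hγ : γ = 1 / τ)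
    (Pf Pg : Y → Y)
    (x : ℕ → X) (y z : ℕ → Y)
    (u : ℕ → X) (v w : ℕ → Y)
    (hu : ∀ k, u k = x k)
    (hv : ∀ k, v k = z k)
    (hw : ∀ k, w k = (1 / τ) • (K (x k) + τ • z k - y k)) :
    (∀ k : ℕ,
        γ • K (x (k + 1)) + (z k - γ • y k) = Pg (z k - γ • y k) ∧
        y (k + 1) = Pf (τ • z k + K (x (k + 1))) ∧
        z (k + 1) = z k - γ • (y (k + 1) - K (x (k + 1)))) ↔
      (∀ k : ℕ,
        K (u (k + 1)) - K (u k) + τ • w k = τ • Pg (w k - (1 / τ) • K (u k)) ∧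
        τ • v (k + 1) = τ • v k + K (u (k + 1)) - Pf (τ • v k + K (u (k + 1))) ∧
        w (k + 1) = (2 : ℝ) • v (k + 1) - v k) := by
  subst hγ
  simp only [hu, hv, hw, one_div]
  refine forall_congr' fun k => ?_
  rw [inv_smul_sub_inv_smul hτ.ne', primal_step_iff hτ.ne', extrapolation_iff_dual_step hτ.ne']
  exact and_congr_right' (and_congr_left fun hz => (prox_step_iff_of_dual_step hτ.ne' hz).symm)
end

section
/- Let E be a finite-dimensional real inner product space, f, g : E → ℝ convex functions, γ > 0, and λ ∈ (0, 2). For a convex function φ : E → ℝ and t > 0, let prox_φ^t(x) denote the unique minimizer of z ↦ φ(z) + ‖z − x‖²/(2t); let φ*(w) = sup_z (⟨w, z⟩ − φ(z)) ∈ ℝ ∪ {+∞} be the convex conjugate, and let prox_{φ*}^t(x) denote the unique minimizer of w ↦ φ*(w) + ‖w − x‖²/(2t). Suppose sequences (s_k), (t_k) in E satisfy t_k = prox_f^γ(s_k) and s_{k+1} = s_k − λ t_k + λ prox_g^γ(2 t_k − s_k) for all k. Define q_k = s_k/γ and p_k = (s_k − t_k)/γ. Then for all k: p_k = prox_{f*}^{1/γ}(q_k)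 and q_{k+1} = q_k − λ p_k − λ prox_{g*}^{1/γ}(−2 p_k + q_k). -/
open scoped RealInnerProductSpace

noncomputable section

/-! Moreau's identity: if `u = prox_φ^γ(x)` then `(x - u)/γ` is a subgradient of `φ` at `u`,
so the conjugate `φ*` at `(x - u)/γ` is attained at `u`, and an elementary completion of the
square shows that `(x - u)/γ` minimizes `w ↦ φ*(w) + (γ/2)‖w − x/γ‖²`, i.e. it is
`prox_{φ*}^{1/γ}(x/γ)`. Applying this to `f` at `s_k` and to `g` at `2 t_k − s_k` turns
each primal Douglas–Rachford step into the dual one. -/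

open Filter Set Topology

lemma nonneg_of_forall_mem_Ioc_nonneg_add_mul {a b : ℝ}
    (h : ∀ θ ∈ Ioc (0 : ℝ) 1, 0 ≤ a + θ * b) : 0 ≤ a := by
  have hlim : Tendsto (fun θ : ℝ => a + θ * b) (𝓝[>] 0) (𝓝 a) := by
    have : Tendsto (fun θ : ℝ => a + θ * b) (𝓝 0) (𝓝 (a + 0 * b)) :=
      (continuous_const.add (continuous_id.mul continuous_const)).tendsto 0
    simpa using this.mono_left nhdsWithin_le_nhds
  exact ge_of_tendsto hlim (eventually_of_mem (Ioc_mem_nhdsGT one_pos) h)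

lemma le_of_forall_ne_lt {α β : Type*} [Preorder β] {F : α → β} {p : α}
    (hp : ∀ z, z ≠ p → F p < F z) (z : α) : F p ≤ F z := by
  rcases eq_or_ne z p with rfl | hz
  · exact le_rfl
  · exact (hp z hz).le

lemma eq_of_forall_le_of_forall_ne_lt {α β : Type*} [Preorder β] {F : α → β} {p y : α}
    (hp : ∀ z, z ≠ p → F p < F z) (hy : ∀ z, F y ≤ F z) : y = p :=
  by_contra fun hne => (hp y hne).not_ge (hy p)

def convexConjugate {E : Type*} [NormedAddCommGroup E] [InnerProductSpace ℝ E]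
    (φ : E → ℝ) (w : E) : EReal :=
  ⨆ z : E, ((⟪w, z⟫ - φ z : ℝ) : EReal)

section Moreau

variable {E : Type*} [NormedAddCommGroup E] [InnerProductSpace ℝ E]
  {φ : E → ℝ} {γ : ℝ} {x u : E}

lemma ConvexOn.inner_le_sub_of_isMinimizer_prox (hφ : ConvexOn ℝ univ φ) (hγ : 0 < γ)
    (hu : ∀ z, φ u + ‖u - x‖ ^ 2 / (2 * γ) ≤ φ z + ‖z - x‖ ^ 2 / (2 * γ)) (z : E) :
    ⟪γ⁻¹ • (x - u), z - u⟫ ≤ φ z - φ u := by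
  have hinner : ⟪γ⁻¹ • (x - u), z - u⟫ = -(γ⁻¹ * ⟪u - x, z - u⟫) := by
    rw [real_inner_smul_left, ← neg_sub u x, inner_neg_left]; ring
  rw [hinner, ← sub_nonneg]
  refine nonneg_of_forall_mem_Ioc_nonneg_add_mul (b := ‖z - u‖ ^ 2 / (2 * γ))
    fun θ ⟨hθ0, hθ1⟩ => ?_
  have hconv : φ ((1 - θ) • u + θ • z) ≤ (1 - θ) * φ u + θ * φ z :=
    hφ.2 (mem_univ u) (mem_univ z) (by linarith) hθ0.le (by ring)
  have hmin := hu ((1 - θ) • u + θ • z)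
  have hnorm : ‖(1 - θ) • u + θ • z - x‖ ^ 2
      = ‖u - x‖ ^ 2 + 2 * (θ * ⟪u - x, z - u⟫) + θ ^ 2 * ‖z - u‖ ^ 2 := by
    rw [show (1 - θ) • u + θ • z - x = (u - x) + θ • (z - u) by module, norm_add_sq_real,
      real_inner_smul_right, norm_smul, Real.norm_eq_abs, mul_pow, sq_abs]
  rw [hnorm] at hmin
  -- Multiplied by `θ`, the claimed quantity is the gain of the convex combination over `u`.
  have hscaled : 0 ≤ θ * (φ z - φ u - -(γ⁻¹ * ⟪u - x, z - u⟫) + θ * (‖z - u‖ ^ 2 / (2 * γ))) := by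
    have hexpand : θ * (φ z - φ u - -(γ⁻¹ * ⟪u - x, z - u⟫) + θ * (‖z - u‖ ^ 2 / (2 * γ)))
        = ((1 - θ) * φ u + θ * φ z
            + (‖u - x‖ ^ 2 + 2 * (θ * ⟪u - x, z - u⟫) + θ ^ 2 * ‖z - u‖ ^ 2) / (2 * γ))
          - (φ u + ‖u - x‖ ^ 2 / (2 * γ)) := by
      field_simp
      ring
    rw [hexpand]
    linarith
  exact nonneg_of_mul_nonneg_right hscaled hθ0

lemma ConvexOn.convexConjugate_eq_of_isMinimizer_prox (hφ : ConvexOn ℝ univ φ) (hγ : 0 < γ)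
    (hu : ∀ z, φ u + ‖u - x‖ ^ 2 / (2 * γ) ≤ φ z + ‖z - x‖ ^ 2 / (2 * γ)) :
    convexConjugate φ (γ⁻¹ • (x - u)) = ((⟪γ⁻¹ • (x - u), u⟫ - φ u : ℝ) : EReal) := by
  refine le_antisymm (iSup_le fun z => EReal.coe_le_coe_iff.2 ?_) ?_
  · have := hφ.inner_le_sub_of_isMinimizer_prox hγ hu z
    rw [inner_sub_right] at this
    linarith
  · exact le_iSup (fun z : E => ((⟪γ⁻¹ • (x - u), z⟫ - φ z : ℝ) : EReal)) u

lemma ConvexOn.isMinimizer_prox_convexConjugate (hφ : ConvexOn ℝ univ φ) (hγ : 0 < γ)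
    (hu : ∀ z, φ u + ‖u - x‖ ^ 2 / (2 * γ) ≤ φ z + ‖z - x‖ ^ 2 / (2 * γ)) (w : E) :
    convexConjugate φ (γ⁻¹ • (x - u)) +
        ((‖γ⁻¹ • (x - u) - γ⁻¹ • x‖ ^ 2 / (2 * (1 / γ)) : ℝ) : EReal) ≤
      convexConjugate φ w + ((‖w - γ⁻¹ • x‖ ^ 2 / (2 * (1 / γ)) : ℝ) : EReal) := by
  set w₀ := γ⁻¹ • (x - u)
  have hw₀ : w₀ - γ⁻¹ • x = -(γ⁻¹ • u) := by module
  have hw : w - γ⁻¹ • x = (w - w₀) - γ⁻¹ • u := by module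
  -- Completing the square: `(γ/2)‖w − x/γ‖² = (γ/2)‖w − w₀‖² − ⟪w − w₀, u⟫ + ‖u‖²/(2γ)`.
  have hsquare : ⟪w₀, u⟫ - φ u + ‖w₀ - γ⁻¹ • x‖ ^ 2 / (2 * (1 / γ))
      ≤ ⟪w, u⟫ - φ u + ‖w - γ⁻¹ • x‖ ^ 2 / (2 * (1 / γ)) := by
    rw [hw₀, hw, norm_neg, norm_sub_sq_real, real_inner_smul_right, inner_sub_left,
      norm_smul, Real.norm_eq_abs, mul_pow, sq_abs]
    field_simp
    nlinarith [mul_nonneg hγ.le (sq_nonneg ‖w - w₀‖)]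
  calc convexConjugate φ w₀ + ((‖w₀ - γ⁻¹ • x‖ ^ 2 / (2 * (1 / γ)) : ℝ) : EReal)
      = ((⟪w₀, u⟫ - φ u + ‖w₀ - γ⁻¹ • x‖ ^ 2 / (2 * (1 / γ)) : ℝ) : EReal) := by
        rw [hφ.convexConjugate_eq_of_isMinimizer_prox hγ hu, EReal.coe_add]
    _ ≤ ((⟪w, u⟫ - φ u + ‖w - γ⁻¹ • x‖ ^ 2 / (2 * (1 / γ)) : ℝ) : EReal) :=
        EReal.coe_le_coe_iff.2 hsquare
    _ = ((⟪w, u⟫ - φ u : ℝ) : EReal) + ((‖w - γ⁻¹ • x‖ ^ 2 / (2 * (1 / γ)) : ℝ) : EReal) :=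
        EReal.coe_add _ _
    _ ≤ convexConjugate φ w + ((‖w - γ⁻¹ • x‖ ^ 2 / (2 * (1 / γ)) : ℝ) : EReal) :=
        add_le_add_left (le_iSup (fun z : E => ((⟪w, z⟫ - φ z : ℝ) : EReal)) u) _

lemma ConvexOn.inv_smul_sub_prox_eq_prox_convexConjugate (hφ : ConvexOn ℝ univ φ)
    (hγ : 0 < γ) (prox proxstar : E → E)
    (hprox : ∀ x z : E, z ≠ prox x →
      φ (prox x) + ‖prox x - x‖ ^ 2 / (2 * γ) < φ z + ‖z - x‖ ^ 2 / (2 * γ))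
    (hproxstar : ∀ x w : E, w ≠ proxstar x →
      convexConjugate φ (proxstar x) + ((‖proxstar x - x‖ ^ 2 / (2 * (1 / γ)) : ℝ) : EReal) <
        convexConjugate φ w + ((‖w - x‖ ^ 2 / (2 * (1 / γ)) : ℝ) : EReal))
    (x : E) :
    γ⁻¹ • (x - prox x) = proxstar (γ⁻¹ • x) :=
  eq_of_forall_le_of_forall_ne_lt
    (F := fun w => convexConjugate φ w + ((‖w - γ⁻¹ • x‖ ^ 2 / (2 * (1 / γ)) : ℝ) : EReal))
    (hproxstar (γ⁻¹ • x))
    (hφ.isMinimizer_prox_convexConjugate hγ 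
      (le_of_forall_ne_lt (F := fun z => φ z + ‖z - x‖ ^ 2 / (2 * γ)) (hprox x)))

end Moreau

theorem drs_primal_dual_equivalence_general
    {E : Type*} [NormedAddCommGroup E] [InnerProductSpace ℝ E]
    (f g : E → ℝ) (hf : ConvexOn ℝ Set.univ f) (hg : ConvexOn ℝ Set.univ g)
    (γ lam : ℝ) (hγ : 0 < γ)
    (proxf proxg proxfstar proxgstar : E → E)
    -- `prox_f^γ(x)` is the unique minimizer of `z ↦ f(z) + ‖z − x‖²/(2γ)`
    (hproxf : ∀ x z : E, z ≠ proxf x →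
      f (proxf x) + ‖proxf x - x‖ ^ 2 / (2 * γ) < f z + ‖z - x‖ ^ 2 / (2 * γ))
    (hproxg : ∀ x z : E, z ≠ proxg x →
      g (proxg x) + ‖proxg x - x‖ ^ 2 / (2 * γ) < g z + ‖z - x‖ ^ 2 / (2 * γ))
    -- `prox_{f*}^{1/γ}(x)` is the unique minimizer of `w ↦ f*(w) + ‖w − x‖²/(2·(1/γ))`
    (hproxfstar : ∀ x w : E, w ≠ proxfstar x →
      (⨆ z : E, ((⟪proxfstar x, z⟫ - f z : ℝ) : EReal)) +
          ((‖proxfstar x - x‖ ^ 2 / (2 * (1 / γ)) : ℝ) : EReal) <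
        (⨆ z : E, ((⟪w, z⟫ - f z : ℝ) : EReal)) +
          ((‖w - x‖ ^ 2 / (2 * (1 / γ)) : ℝ) : EReal))
    (hproxgstar : ∀ x w : E, w ≠ proxgstar x →
      (⨆ z : E, ((⟪proxgstar x, z⟫ - g z : ℝ) : EReal)) +
          ((‖proxgstar x - x‖ ^ 2 / (2 * (1 / γ)) : ℝ) : EReal) <
        (⨆ z : E, ((⟪w, z⟫ - g z : ℝ) : EReal)) +
          ((‖w - x‖ ^ 2 / (2 * (1 / γ)) : ℝ) : EReal))
    (s t : ℕ → E)
    (ht : ∀ k, t k = proxf (s k))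
    (hs : ∀ k, s (k + 1) = s k - lam • t k + lam • proxg ((2 : ℝ) • t k - s k)) :
    ∀ k : ℕ,
      γ⁻¹ • (s k - t k) = proxfstar (γ⁻¹ • s k) ∧
      γ⁻¹ • s (k + 1) =
        γ⁻¹ • s k - lam • (γ⁻¹ • (s k - t k)) -
          lam • proxgstar (-(2 : ℝ) • (γ⁻¹ • (s k - t k)) + γ⁻¹ • s k) := by
  intro k
  have moreau_f := hf.inv_smul_sub_prox_eq_prox_convexConjugate hγ proxf proxfstar
    hproxf hproxfstar (s k)
  have moreau_g := hg.inv_smul_sub_prox_eq_prox_convexConjugate hγ proxg proxgstar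
    hproxg hproxgstar ((2 : ℝ) • t k - s k)
  refine ⟨ht k ▸ moreau_f, ?_⟩
  have hdual_arg : -(2 : ℝ) • (γ⁻¹ • (s k - t k)) + γ⁻¹ • s k
      = γ⁻¹ • ((2 : ℝ) • t k - s k) := by module
  rw [hdual_arg, ← moreau_g, hs k]
  module

/-- Appendix B of the paper: equivalence of Douglas–Rachford splitting
(step `γ`, relaxation `λ`) on the primal problem `min f + g` with Douglas–Rachford
splitting (step `1/γ`, relaxation `λ`) on the dual problem `min f* (·) + g*(−·)`,
via `q_k = s_k/γ`, `p_k = (s_k − t_k)/γ`.  The proximal maps of the conjugates are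
characterized as unique minimizers of `w ↦ φ*(w) + ‖w − x‖²/(2·(1/γ))` in `EReal`. -/
theorem drs_primal_dual_equivalence
    {E : Type*} [NormedAddCommGroup E] [InnerProductSpace ℝ E] [FiniteDimensional ℝ E]
    (f g : E → ℝ) (hf : ConvexOn ℝ Set.univ f) (hg : ConvexOn ℝ Set.univ g)
    (γ lam : ℝ) (hγ : 0 < γ) (hlam : 0 < lam ∧ lam < 2)
    (proxf proxg proxfstar proxgstar : E → E)
    -- `prox_f^γ(x)` is the unique minimizer of `z ↦ f(z) + ‖z − x‖²/(2γ)`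
    (hproxf : ∀ x z : E, z ≠ proxf x →
      f (proxf x) + ‖proxf x - x‖ ^ 2 / (2 * γ) < f z + ‖z - x‖ ^ 2 / (2 * γ))
    (hproxg : ∀ x z : E, z ≠ proxg x →
      g (proxg x) + ‖proxg x - x‖ ^ 2 / (2 * γ) < g z + ‖z - x‖ ^ 2 / (2 * γ))
    -- `prox_{f*}^{1/γ}(x)` is the unique minimizer of `w ↦ f*(w) + ‖w − x‖²/(2·(1/γ))`
    (hproxfstar : ∀ x w : E, w ≠ proxfstar x →
      (⨆ z : E, ((⟪proxfstar x, z⟫ - f z : ℝ) : EReal)) +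
          ((‖proxfstar x - x‖ ^ 2 / (2 * (1 / γ)) : ℝ) : EReal) <
        (⨆ z : E, ((⟪w, z⟫ - f z : ℝ) : EReal)) +
          ((‖w - x‖ ^ 2 / (2 * (1 / γ)) : ℝ) : EReal))
    (hproxgstar : ∀ x w : E, w ≠ proxgstar x →
      (⨆ z : E, ((⟪proxgstar x, z⟫ - g z : ℝ) : EReal)) +
          ((‖proxgstar x - x‖ ^ 2 / (2 * (1 / γ)) : ℝ) : EReal) <
        (⨆ z : E, ((⟪w, z⟫ - g z : ℝ) : EReal)) +
          ((‖w - x‖ ^ 2 / (2 * (1 / γ)) : ℝ) : EReal))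
    (s t : ℕ → E)
    (ht : ∀ k, t k = proxf (s k))
    (hs : ∀ k, s (k + 1) = s k - lam • t k + lam • proxg ((2 : ℝ) • t k - s k)) :
    ∀ k : ℕ,
      γ⁻¹ • (s k - t k) = proxfstar (γ⁻¹ • s k) ∧
      γ⁻¹ • s (k + 1) =
        γ⁻¹ • s k - lam • (γ⁻¹ • (s k - t k)) -
          lam • proxgstar (-(2 : ℝ) • (γ⁻¹ • (s k - t k)) + γ⁻¹ • s k) :=
  drs_primal_dual_equivalence_general f g hf hg γ lam hγ proxf proxg proxfstar proxgstar hproxf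
    hproxg hproxfstar hproxgstar s t ht hs
end
end
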